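/- arXiv:math/0009142 — 7 statements merged into one kernel-verified Lean document; each statement's English description precedes it below -/
import Mathlib

section
/- Let R < 1/√2. The maximum number N of points x_1,...,x_N that can be placed in a closed Euclidean ball of radius R in R^d (for d sufficiently large, e.g. d ≥ N) such that ‖x_i - x_j‖ ≥ 1 for all i ≠ j equals ⌊1/(1-2R²)⌋. -/
set_option maxHeartbeats 1000000 in
open Finset in
/-- Rankin's theorem: for `R < 1/√2`, the maximum number `N` of points in the closed
Euclidean ball of radius `R` (in dimension `≥ N`, here `d = N`) which are pairwise
at distance `≥ 1` equals `⌊1/(1-2R²)⌋`. -/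
theorem stmt_0 (R : ℝ) (hR0 : 0 ≤ R) (hR : R < 1 / Real.sqrt 2) :
    IsGreatest {N : ℕ | ∃ x : Fin N → EuclideanSpace ℝ (Fin N),
        (∀ i, ‖x i‖ ≤ R) ∧ ∀ i j, i ≠ j → 1 ≤ ‖x i - x j‖}
      ⌊1 / (1 - 2 * R ^ 2)⌋₊ := by
  have h2 : (0:ℝ) < Real.sqrt 2 := Real.sqrt_pos.mpr (by norm_num)
  have hs2 : Real.sqrt 2 * Real.sqrt 2 = 2 := Real.mul_self_sqrt (by norm_num)
  have hkey : (1 / Real.sqrt 2) * (1 / Real.sqrt 2) = 1 / 2 := by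
    rw [div_mul_div_comm, one_mul, hs2]
  have hR2 : R ^ 2 < 1 / 2 := by
    nlinarith [mul_self_lt_mul_self hR0 hR]
  have hε : (0:ℝ) < 1 - 2 * R ^ 2 := by linarith
  have hfl : (1:ℝ) ≤ 1 / (1 - 2 * R ^ 2) := by
    rw [le_div_iff₀ hε]; nlinarith
  set m : ℕ := ⌊1 / (1 - 2 * R ^ 2)⌋₊ with hm
  have hm1 : 1 ≤ m := Nat.le_floor (by exact_mod_cast hfl)
  have hM0 : (0:ℝ) < (m:ℝ) := by exact_mod_cast hm1
  have hmle : (m:ℝ) ≤ 1 / (1 - 2 * R ^ 2) := Nat.floor_le (by linarith)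
  have h1 : (m:ℝ) * (1 - 2 * R ^ 2) ≤ 1 := by
    rw [← le_div_iff₀ hε]; exact hmle
  constructor
  · -- membership: construct m points
    set a : ℝ := 1 / Real.sqrt 2 with ha
    have ha2 : a ^ 2 = 1 / 2 := by
      rw [ha, sq, hkey]
    refine ⟨fun i => (WithLp.equiv 2 (Fin m → ℝ)).symm
      (fun k => (if i = k then a else 0) - a / m), ?_, ?_⟩
    · intro i
      have hn : ‖(WithLp.equiv 2 (Fin m → ℝ)).symm
          (fun k => (if i = k then a else 0) - a / m)‖
          = Real.sqrt (∑ k, ((if i = k then a else 0) - a / m) ^ 2) := by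
        rw [EuclideanSpace.norm_eq]
        congr 1
        apply Finset.sum_congr rfl
        intro k _
        rw [Real.norm_eq_abs, sq_abs]
        rfl
      rw [hn]
      have hsum : (∑ k, ((if i = k then a else 0) - a / m) ^ 2)
          = a ^ 2 * (1 - 1 / m) := by
        have : ∀ k, ((if i = k then a else 0) - a / m) ^ 2
            = (if i = k then a ^ 2 - 2 * a * (a / m) else 0) + (a / m) ^ 2 := by
          intro k; split <;> ring
        rw [Finset.sum_congr rfl fun k _ => this k, Finset.sum_add_distrib,
          Finset.sum_ite_eq, Finset.sum_const, Finset.card_univ, Fintype.card_fin]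
        simp only [Finset.mem_univ, if_true, nsmul_eq_mul]
        field_simp
        ring
      rw [hsum]
      have hle : a ^ 2 * (1 - 1 / m) ≤ R ^ 2 := by
        rw [ha2]
        have heq : (1:ℝ)/2 * (1 - 1/(m:ℝ)) = ((m:ℝ) - 1)/(2 * m) := by
          field_simp
        rw [heq, div_le_iff₀ (by positivity)]
        nlinarith [h1]
      calc Real.sqrt (a ^ 2 * (1 - 1 / m)) ≤ Real.sqrt (R ^ 2) :=
            Real.sqrt_le_sqrt hle
        _ = R := Real.sqrt_sq hR0
    · intro i j hij
      have hn : ‖((WithLp.equiv 2 (Fin m → ℝ)).symm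
            (fun k => (if i = k then a else 0) - a / m) :
            EuclideanSpace ℝ (Fin m)) -
          (WithLp.equiv 2 (Fin m → ℝ)).symm
            (fun k => (if j = k then a else 0) - a / m)‖
          = Real.sqrt (∑ k, ((if i = k then a else 0) - (if j = k then a else 0)) ^ 2) := by
        rw [EuclideanSpace.norm_eq]
        congr 1
        apply Finset.sum_congr rfl
        intro k _
        rw [Real.norm_eq_abs, sq_abs]
        show ((if i = k then a else 0) - a / m - ((if j = k then a else 0) - a / m)) ^ 2 = _
        ring
      rw [hn]
      have hsum : (∑ k, ((if i = k then a else 0) - (if j = k then a else 0)) ^ 2) = 1 := by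
        have : ∀ k, ((if i = k then a else 0) - (if j = k then a else 0)) ^ 2
            = (if i = k then a ^ 2 else 0) + (if j = k then a ^ 2 else 0) := by
          intro k
          split_ifs with h1 h3
          · exact absurd (h1.trans h3.symm) hij
          · ring
          · ring
          · ring
        rw [Finset.sum_congr rfl fun k _ => this k, Finset.sum_add_distrib,
          Finset.sum_ite_eq, Finset.sum_ite_eq]
        simp [ha2]
        norm_num
      rw [hsum, Real.sqrt_one]
  · -- upper bound
    rintro N ⟨x, hx, hxx⟩
    apply Nat.le_floor
    rcases Nat.eq_zero_or_pos N with h | h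
    · subst h
      simpa using le_trans zero_le_one hfl
    have hN1 : (1:ℝ) ≤ (N:ℝ) := by exact_mod_cast h
    have key : (0:ℝ) ≤ ∑ i, ∑ j, (inner ℝ (x i) (x j) : ℝ) := by
      have heq : (∑ i, ∑ j, (inner ℝ (x i) (x j) : ℝ)) = ‖∑ i, x i‖ ^ 2 := by
        rw [← real_inner_self_eq_norm_sq, sum_inner]
        exact Finset.sum_congr rfl fun i _ => (inner_sum _ _ _).symm
      rw [heq]; positivity
    have bound : (∑ i, ∑ j, (inner ℝ (x i) (x j) : ℝ))
        ≤ ∑ i : Fin N, ∑ j : Fin N,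
            ((2 * R ^ 2 - 1) / 2 + if i = j then R ^ 2 - (2 * R ^ 2 - 1) / 2 else 0) := by
      apply Finset.sum_le_sum; intro i _
      apply Finset.sum_le_sum; intro j _
      by_cases hij : i = j
      · subst hij
        rw [if_pos rfl, real_inner_self_eq_norm_sq]
        nlinarith [hx i, norm_nonneg (x i)]
      · rw [if_neg hij]
        have hd1 : 1 ≤ ‖x i - x j‖ := hxx i j hij
        have hd2 : ‖x i - x j‖ ^ 2 = ‖x i‖ ^ 2 - 2 * inner ℝ (x i) (x j) + ‖x j‖ ^ 2 :=
          norm_sub_sq_real (x i) (x j)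
        have h1sq : 1 ≤ ‖x i - x j‖ ^ 2 := by nlinarith [hd1]
        nlinarith [hx i, hx j, norm_nonneg (x i), norm_nonneg (x j)]
    have rhs : (∑ i : Fin N, ∑ j : Fin N,
          ((2 * R ^ 2 - 1) / 2 + if i = j then R ^ 2 - (2 * R ^ 2 - 1) / 2 else 0))
        = N * (N * ((2 * R ^ 2 - 1) / 2) + (R ^ 2 - (2 * R ^ 2 - 1) / 2)) := by
      have hrow : ∀ i : Fin N, (∑ j : Fin N,
            ((2 * R ^ 2 - 1) / 2 + if i = j then R ^ 2 - (2 * R ^ 2 - 1) / 2 else 0))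
          = N * ((2 * R ^ 2 - 1) / 2) + (R ^ 2 - (2 * R ^ 2 - 1) / 2) := by
        intro i
        rw [Finset.sum_add_distrib, Finset.sum_const, Finset.card_univ, Fintype.card_fin,
          Finset.sum_ite_eq, nsmul_eq_mul]
        simp
      rw [Finset.sum_congr rfl fun i _ => hrow i, Finset.sum_const, Finset.card_univ,
        Fintype.card_fin, nsmul_eq_mul]
    have h0 : (0:ℝ) ≤ (N:ℝ) * ((N:ℝ) * ((2 * R ^ 2 - 1) / 2) + (R ^ 2 - (2 * R ^ 2 - 1) / 2)) := by
      rw [← rhs]; exact le_trans key bound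
    have hNc : (0:ℝ) ≤ (N:ℝ) * ((2 * R ^ 2 - 1) / 2) + (R ^ 2 - (2 * R ^ 2 - 1) / 2) := by
      nlinarith [h0, hN1]
    rw [le_div_iff₀ hε]
    nlinarith [hNc]
end

section
/- Let E be a normed space and φ : E^n → E^{n(n-1)/2} the linear map sending (v_1,...,v_n) to the family (v_i - v_j)_{i<j}. With the ℓ¹-type norm N_{1,s}(w_1,...,w_s) = ∑ ‖w_k‖ on each product space, the operator norm of φ equals n-1 (for n ≥ 2 and E nontrivial). -/
/-!
Bounding each `‖vᵢ - vⱼ‖` by `‖vᵢ‖ + ‖vⱼ‖` and noting that every index lies in exactly `n - 1`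
pairs gives `∑_{i<j} ‖vᵢ - vⱼ‖ ≤ (n - 1) ∑ᵢ ‖vᵢ‖`. For `v = Pi.single i₀ e` with `e ≠ 0`, at most
one of `vᵢ, vⱼ` is nonzero, so every triangle inequality is an equality and the bound is attained.
-/

open Finset

theorem sum_filter_lt_add {α M : Type*} [Fintype α] [LinearOrder α] [AddCommMonoid M]
    (f : α → M) :
    ∑ p ∈ univ.filter (fun p : α × α => p.1 < p.2), (f p.1 + f p.2)
      = (Fintype.card α - 1) • ∑ i, f i := by
  have swap : ∑ p ∈ univ.filter (fun p : α × α => p.1 < p.2), f p.2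
      = ∑ p ∈ univ.filter (fun p : α × α => p.2 < p.1), f p.1 :=
    sum_equiv (Equiv.prodComm α α) (by simp) (by simp)
  rw [sum_add_distrib, swap, ← sum_union (disjoint_filter.2 fun p _ h => h.not_gt),
    ← filter_or, sum_filter, Fintype.sum_prod_type, smul_sum]
  refine sum_congr rfl fun i _ => ?_
  simp only [lt_or_lt_iff_ne, ← sum_filter, sum_const, filter_ne,
    card_erase_of_mem (mem_univ i), card_univ]

section PiSingle

variable {ι E : Type*} [DecidableEq ι] [SeminormedAddCommGroup E]

theorem norm_pi_single_sub_pi_single {i j : ι} (i₀ : ι) (e : E) (hij : i ≠ j) :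
    ‖(Pi.single i₀ e : ι → E) i - (Pi.single i₀ e : ι → E) j‖
      = ‖(Pi.single i₀ e : ι → E) i‖ + ‖(Pi.single i₀ e : ι → E) j‖ := by
  rcases eq_or_ne i i₀ with rfl | hi
  · simp [hij.symm]
  · simp [Pi.single_apply, hi]

theorem sum_norm_pi_single [Fintype ι] (i₀ : ι) (e : E) :
    ∑ i, ‖(Pi.single i₀ e : ι → E) i‖ = ‖e‖ := by
  simp [Pi.single_apply, apply_ite]

end PiSingle

theorem stmt_3_general {E : Type*} [NormedAddCommGroup E] [Nontrivial E]
    (n : ℕ) (hn : 2 ≤ n) :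
    IsLeast {C : ℝ | 0 ≤ C ∧ ∀ v : Fin n → E,
        ∑ p ∈ Finset.univ.filter (fun p : Fin n × Fin n => p.1 < p.2),
            ‖v p.1 - v p.2‖ ≤ C * ∑ i, ‖v i‖}
      (n - 1) := by
  have sum_pairs : ∀ v : Fin n → E,
      ∑ p ∈ univ.filter (fun p : Fin n × Fin n => p.1 < p.2), (‖v p.1‖ + ‖v p.2‖)
        = (n - 1) * ∑ i, ‖v i‖ := fun v => by
    rw [sum_filter_lt_add (fun i => ‖v i‖), Fintype.card_fin, nsmul_eq_mul,
      Nat.cast_pred (by omega)]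
  constructor
  · refine ⟨by linarith [(Nat.ofNat_le_cast.2 hn : (2 : ℝ) ≤ n)], fun v => ?_⟩
    exact (sum_le_sum fun p _ => norm_sub_le _ _).trans (sum_pairs v).le
  · rintro C ⟨-, hC⟩
    obtain ⟨e, he⟩ := exists_ne (0 : E)
    have attained := hC (Pi.single ⟨0, by omega⟩ e)
    rw [sum_congr rfl fun p hp => norm_pi_single_sub_pi_single _ e (mem_filter.1 hp).2.ne,
      sum_pairs, sum_norm_pi_single] at attained
    exact le_of_mul_le_mul_right attained (norm_pos_iff.2 he)

/-- With ℓ¹-type norms on the product spaces, the operator norm of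
`φ : (v₁,…,vₙ) ↦ (vᵢ - vⱼ)_{i<j}` equals `n - 1`:
`n - 1` is the least constant `C ≥ 0` with
`∑_{i<j} ‖vᵢ - vⱼ‖ ≤ C · ∑ᵢ ‖vᵢ‖` for all `v`. -/
theorem stmt_3 {E : Type*} [NormedAddCommGroup E] [NormedSpace ℝ E] [Nontrivial E]
    (n : ℕ) (hn : 2 ≤ n) :
    IsLeast {C : ℝ | 0 ≤ C ∧ ∀ v : Fin n → E,
        ∑ p ∈ Finset.univ.filter (fun p : Fin n × Fin n => p.1 < p.2),
            ‖v p.1 - v p.2‖ ≤ C * ∑ i, ‖v i‖}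
      (n - 1) :=
  stmt_3_general n hn
end

section
/- Let H be a real inner product space and φ : H^n → H^{n(n-1)/2} the map (v_1,...,v_n) ↦ (v_i - v_j)_{i<j}. With the ℓ²-type norm N_2(w_1,...,w_s) = (∑ ‖w_k‖²)^{1/2} on the product spaces, the operator norm of φ equals √n (for n ≥ 2 and H nontrivial). -/
open Finset in
lemma key_sum {H : Type*} [NormedAddCommGroup H] [InnerProductSpace ℝ H]
    (n : ℕ) (v : Fin n → H) :
    ∑ p ∈ Finset.univ.filter (fun p : Fin n × Fin n => p.1 < p.2),
        ‖v p.1 - v p.2‖ ^ 2 = n * ∑ i, ‖v i‖ ^ 2 - ‖∑ i, v i‖ ^ 2 := by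
  have hall : ∑ i : Fin n, ∑ j : Fin n, ‖v i - v j‖^2
      = 2 * ((n : ℝ) * ∑ i, ‖v i‖ ^ 2) - 2 * ‖∑ i, v i‖ ^ 2 := by
    have h1 : ∑ i : Fin n, ∑ j : Fin n, (inner ℝ (v i) (v j) : ℝ) = ‖∑ i, v i‖^2 := by
      rw [← real_inner_self_eq_norm_sq, sum_inner]
      exact Finset.sum_congr rfl fun i _ => (inner_sum _ _ _).symm
    have expand : ∀ x y : H, ‖x - y‖^2 = ‖x‖^2 - 2 * inner ℝ x y + ‖y‖^2 :=
      fun x y => norm_sub_sq_real x y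
    simp_rw [expand]
    rw [Finset.sum_congr rfl (fun i _ => Finset.sum_add_distrib),
        Finset.sum_congr rfl (fun i _ => congrArg (· + _) (Finset.sum_sub_distrib _ _))]
    simp [Finset.sum_add_distrib, Finset.sum_sub_distrib, Finset.mul_sum, ← h1,
      Finset.card_univ, two_mul]
    ring
  have hsplit : ∑ i : Fin n, ∑ j : Fin n, ‖v i - v j‖^2
      = 2 * ∑ p ∈ Finset.univ.filter (fun p : Fin n × Fin n => p.1 < p.2),
        ‖v p.1 - v p.2‖ ^ 2 := by
    rw [← Finset.sum_product']
    rw [← Finset.sum_filter_add_sum_filter_not _ (fun p : Fin n × Fin n => p.1 < p.2)]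
    have hswap : ∑ p ∈ (Finset.univ ×ˢ Finset.univ).filter
          (fun p : Fin n × Fin n => ¬ p.1 < p.2), ‖v p.1 - v p.2‖ ^ 2
        = ∑ p ∈ (Finset.univ ×ˢ Finset.univ).filter
          (fun p : Fin n × Fin n => p.1 < p.2), ‖v p.1 - v p.2‖ ^ 2 := by
      rw [← Finset.sum_filter_add_sum_filter_not _ (fun p : Fin n × Fin n => p.2 < p.1)]
      have hz : ∑ p ∈ ((Finset.univ ×ˢ Finset.univ).filter
            (fun p : Fin n × Fin n => ¬ p.1 < p.2)).filter (fun p => ¬ p.2 < p.1),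
          ‖v p.1 - v p.2‖ ^ 2 = 0 := by
        apply Finset.sum_eq_zero
        intro p hp
        simp only [Finset.mem_filter] at hp
        have : p.1 = p.2 := le_antisymm (not_lt.1 hp.2) (not_lt.1 hp.1.2)
        simp [this]
      rw [hz, add_zero]
      refine Finset.sum_equiv (Equiv.prodComm _ _) ?_ ?_
      · intro p
        simp only [Finset.mem_filter, Finset.mem_product, Finset.mem_univ, true_and,
          Equiv.prodComm_apply, Prod.fst_swap, Prod.snd_swap]
        constructor
        · exact fun h => h.2
        · exact fun h => ⟨asymm h, h⟩
      · intro p _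
        simp [norm_sub_rev]
    rw [hswap]
    simp [Finset.filter_product, two_mul]
  linarith

/-- With ℓ²-type norms on the product spaces, the operator norm of
`φ : (v₁,…,vₙ) ↦ (vᵢ - vⱼ)_{i<j}` on a real inner product space equals `√n`. -/
theorem stmt_5 {H : Type*} [NormedAddCommGroup H] [InnerProductSpace ℝ H] [Nontrivial H]
    (n : ℕ) (hn : 2 ≤ n) :
    IsLeast {C : ℝ | 0 ≤ C ∧ ∀ v : Fin n → H,
        Real.sqrt (∑ p ∈ Finset.univ.filter (fun p : Fin n × Fin n => p.1 < p.2),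
            ‖v p.1 - v p.2‖ ^ 2) ≤ C * Real.sqrt (∑ i, ‖v i‖ ^ 2)}
      (Real.sqrt n) := by
  constructor
  · refine ⟨Real.sqrt_nonneg _, fun v => ?_⟩
    rw [key_sum, ← Real.sqrt_mul (by positivity : (0:ℝ) ≤ (n:ℝ))]
    apply Real.sqrt_le_sqrt
    nlinarith [sq_nonneg ‖∑ i, v i‖]
  · rintro C ⟨hC0, hC⟩
    obtain ⟨x, hx⟩ := exists_ne (0 : H)
    have h01 : (⟨0, by omega⟩ : Fin n) ≠ ⟨1, by omega⟩ := by
      simp [Fin.ext_iff]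
    set i0 : Fin n := ⟨0, by omega⟩
    set i1 : Fin n := ⟨1, by omega⟩
    set v : Fin n → H := Pi.single i0 x - Pi.single i1 x with hv
    have hsum0 : ∑ i, v i = 0 := by
      simp [hv, Finset.sum_sub_distrib, Finset.sum_pi_single']
    have hnormsum : ∑ i, ‖v i‖ ^ 2 = 2 * ‖x‖ ^ 2 := by
      have hsub : ∑ i, ‖v i‖ ^ 2 = ∑ i ∈ ({i0, i1} : Finset (Fin n)), ‖v i‖ ^ 2 := by
        refine (Finset.sum_subset (Finset.subset_univ _) fun i _ hi => ?_).symm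
        simp only [Finset.mem_insert, Finset.mem_singleton, not_or] at hi
        simp [hv, Pi.single_eq_of_ne hi.1, Pi.single_eq_of_ne hi.2]
      rw [hsub, Finset.sum_pair h01]
      simp [hv, Pi.single_eq_of_ne h01, Pi.single_eq_of_ne (Ne.symm h01)]
      ring
    have hkey := key_sum n v
    rw [hsum0, hnormsum] at hkey
    simp only [norm_zero] at hkey
    have h := hC v
    rw [hkey, hnormsum] at h
    have hx' : 0 < ‖x‖ := norm_pos_iff.2 hx
    have e1 : Real.sqrt ((n:ℝ) * (2 * ‖x‖ ^ 2))
        = Real.sqrt n * (Real.sqrt 2 * ‖x‖) := by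
      rw [Real.sqrt_mul (by positivity), Real.sqrt_mul (by norm_num),
        Real.sqrt_sq hx'.le]
    have e2 : Real.sqrt (2 * ‖x‖ ^ 2) = Real.sqrt 2 * ‖x‖ := by
      rw [Real.sqrt_mul (by norm_num), Real.sqrt_sq hx'.le]
    norm_num [e1, e2] at h
    have hpos : 0 < Real.sqrt 2 * ‖x‖ := by positivity
    exact le_of_mul_le_mul_right h hpos
end

section
/- For every n ≥ 2 and any vectors v_1,...,v_n in ℓ^q (1 < q < ∞), ∑_{1≤i<j≤n} ‖v_i - v_j‖_q^q ≤ n·2^{q-2}·∑_{i=1}^n ‖v_i‖_q^q. -/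
/-!
Coordinatewise, apply the Mazur map `φ t = sign t · |t|^(q/2)`, which sends `|t|^q` to `(φ t)^2`.
An elementary case analysis on signs gives `|x - y|^q ≤ 2^(q-2) (φ x - φ y)^2`, so the pair sum
is bounded by `2^(q-2)` times the corresponding Hilbert-space pair sum of the `φ (vᵢ k)`, and
`∑_{i<j} (bᵢ - bⱼ)^2 = n ∑ bᵢ^2 - (∑ bᵢ)^2 ≤ n ∑ bᵢ^2`. Summing over coordinates gives the claim.
-/

open Finset

theorem Real.rpow_add_le_mul_rpow_add_rpow {p a b : ℝ} (ha : 0 ≤ a) (hb : 0 ≤ b) (hp : 1 ≤ p) :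
    (a + b) ^ p ≤ 2 ^ (p - 1) * (a ^ p + b ^ p) := by
  lift a to NNReal using ha
  lift b to NNReal using hb
  exact_mod_cast NNReal.rpow_add_le_mul_rpow_add_rpow a b hp

theorem Real.sub_rpow_le_rpow_sub_rpow {p x y : ℝ} (hy : 0 ≤ y) (hyx : y ≤ x) (hp : 1 ≤ p) :
    (x - y) ^ p ≤ x ^ p - y ^ p := by
  have := Real.add_rpow_le_rpow_add (sub_nonneg.2 hyx) hy hp
  rw [sub_add_cancel] at this
  linarith

noncomputable def signedRpow (p t : ℝ) : ℝ := if 0 ≤ t then t ^ p else -(-t) ^ p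

theorem signedRpow_of_nonneg {p t : ℝ} (ht : 0 ≤ t) : signedRpow p t = t ^ p := if_pos ht

theorem signedRpow_neg {p : ℝ} (hp : p ≠ 0) (t : ℝ) : signedRpow p (-t) = -signedRpow p t := by
  unfold signedRpow
  rcases lt_trichotomy t 0 with ht | rfl | ht
  · simp [ht.not_ge, neg_nonneg.2 ht.le]
  · simp [Real.zero_rpow hp]
  · simp [ht.le, ht.not_ge]

theorem signedRpow_of_nonpos {p t : ℝ} (hp : p ≠ 0) (ht : t ≤ 0) :
    signedRpow p t = -(-t) ^ p := by
  rw [← neg_neg t, signedRpow_neg hp, signedRpow_of_nonneg (neg_nonneg.2 ht), neg_neg]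

theorem abs_signedRpow {p : ℝ} (hp : p ≠ 0) (t : ℝ) : |signedRpow p t| = |t| ^ p := by
  rcases le_total 0 t with ht | ht
  · rw [signedRpow_of_nonneg ht, abs_of_nonneg ht, abs_of_nonneg (Real.rpow_nonneg ht p)]
  · rw [signedRpow_of_nonpos hp ht, abs_neg, abs_of_nonpos ht,
      abs_of_nonneg (Real.rpow_nonneg (neg_nonneg.2 ht) p)]

theorem abs_sub_rpow_le_mul_abs_signedRpow_sub {p : ℝ} (hp : 1 ≤ p) (x y : ℝ) :
    |x - y| ^ p ≤ 2 ^ (p - 1) * |signedRpow p x - signedRpow p y| := by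
  have hp0 : p ≠ 0 := by positivity
  wlog hyx : y ≤ x generalizing x y
  · rw [abs_sub_comm, abs_sub_comm (signedRpow p x)]
    exact this y x (le_of_not_ge hyx)
  wlog hx : 0 ≤ x generalizing x y
  · have := this (-y) (-x) (neg_le_neg hyx) (by linarith)
    rwa [signedRpow_neg hp0, signedRpow_neg hp0, neg_sub_neg, neg_sub_neg] at this
  rcases le_total 0 y with hy | hy
  · have hpow : y ^ p ≤ x ^ p := Real.rpow_le_rpow hy hyx (by linarith)
    rw [abs_of_nonneg (sub_nonneg.2 hyx), signedRpow_of_nonneg hx, signedRpow_of_nonneg hy,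
      abs_of_nonneg (sub_nonneg.2 hpow)]
    calc (x - y) ^ p ≤ x ^ p - y ^ p := Real.sub_rpow_le_rpow_sub_rpow hy hyx hp
      _ ≤ 2 ^ (p - 1) * (x ^ p - y ^ p) :=
        le_mul_of_one_le_left (sub_nonneg.2 hpow) (Real.one_le_rpow (by norm_num) (by linarith))
  · have hy' : 0 ≤ -y := neg_nonneg.2 hy
    rw [abs_of_nonneg (sub_nonneg.2 hyx), signedRpow_of_nonneg hx, signedRpow_of_nonpos hp0 hy,
      sub_neg_eq_add, abs_of_nonneg (by positivity), sub_eq_add_neg]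
    exact Real.rpow_add_le_mul_rpow_add_rpow hx hy' hp

theorem abs_sub_rpow_le_mul_sq_signedRpow_sub {q : ℝ} (hq : 2 ≤ q) (x y : ℝ) :
    |x - y| ^ q ≤ 2 ^ (q - 2) * (signedRpow (q / 2) x - signedRpow (q / 2) y) ^ 2 := by
  have h := abs_sub_rpow_le_mul_abs_signedRpow_sub (p := q / 2) (by linarith) x y
  have hsq := pow_le_pow_left₀ (by positivity) h 2
  rw [mul_pow, sq_abs, ← Real.rpow_natCast, ← Real.rpow_natCast, ← Real.rpow_mul (abs_nonneg _),
    ← Real.rpow_mul (by norm_num)] at hsq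
  rwa [show q / 2 * ((2 : ℕ) : ℝ) = q by push_cast; ring,
    show (q / 2 - 1) * ((2 : ℕ) : ℝ) = q - 2 by push_cast; ring] at hsq

theorem two_mul_sum_filter_lt_le_sum_sum {ι : Type*} [Fintype ι] [LinearOrder ι]
    {f : ι → ι → ℝ} (hsymm : ∀ i j, f i j = f j i) (hf : ∀ i j, 0 ≤ f i j) :
    2 * ∑ p ∈ univ.filter (fun p : ι × ι => p.1 < p.2), f p.1 p.2 ≤ ∑ i, ∑ j, f i j := by
  have hswap : ∑ p ∈ univ.filter (fun p : ι × ι => p.1 < p.2), f p.1 p.2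
      = ∑ p ∈ univ.filter (fun p : ι × ι => p.2 < p.1), f p.1 p.2 :=
    Finset.sum_nbij' Prod.swap Prod.swap (by simp) (by simp) (by simp) (by simp)
      (fun p _ => hsymm _ _)
  have hdisj : Disjoint (univ.filter (fun p : ι × ι => p.1 < p.2))
      (univ.filter (fun p : ι × ι => p.2 < p.1)) :=
    Finset.disjoint_filter.2 fun p _ h => h.not_gt
  calc 2 * ∑ p ∈ univ.filter (fun p : ι × ι => p.1 < p.2), f p.1 p.2
      = ∑ p ∈ univ.filter (fun p : ι × ι => p.1 < p.2) ∪ univ.filter (fun p => p.2 < p.1),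
          f p.1 p.2 := by rw [sum_union hdisj, ← hswap, two_mul]
    _ ≤ ∑ p : ι × ι, f p.1 p.2 :=
      sum_le_sum_of_subset_of_nonneg (subset_univ _) fun p _ _ => hf _ _
    _ = ∑ i, ∑ j, f i j := Fintype.sum_prod_type _

theorem sum_sum_sub_sq {ι : Type*} [Fintype ι] (b : ι → ℝ) :
    ∑ i, ∑ j, (b i - b j) ^ 2 = 2 * (Fintype.card ι * ∑ i, b i ^ 2 - (∑ i, b i) ^ 2) := by
  simp only [sub_sq, sum_add_distrib, sum_sub_distrib, sum_const, card_univ, nsmul_eq_mul,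
    ← mul_sum, ← sum_mul]
  ring

theorem sum_filter_lt_sub_sq_le {ι : Type*} [Fintype ι] [LinearOrder ι] (b : ι → ℝ) :
    ∑ p ∈ univ.filter (fun p : ι × ι => p.1 < p.2), (b p.1 - b p.2) ^ 2
      ≤ Fintype.card ι * ∑ i, b i ^ 2 := by
  have h := two_mul_sum_filter_lt_le_sum_sum (f := fun i j => (b i - b j) ^ 2)
    (fun i j => by ring) (fun i j => sq_nonneg _)
  rw [sum_sum_sub_sq] at h
  linarith [sq_nonneg (∑ i, b i)]

theorem sum_filter_lt_abs_sub_rpow_le {ι : Type*} [Fintype ι] [LinearOrder ι] {q : ℝ}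
    (hq : 2 ≤ q) (b : ι → ℝ) :
    ∑ p ∈ univ.filter (fun p : ι × ι => p.1 < p.2), |b p.1 - b p.2| ^ q
      ≤ Fintype.card ι * 2 ^ (q - 2) * ∑ i, |b i| ^ q := by
  set φ := signedRpow (q / 2)
  have hφ : ∀ i, φ (b i) ^ 2 = |b i| ^ q := fun i => by
    rw [← sq_abs, abs_signedRpow (by positivity), ← Real.rpow_natCast, ← Real.rpow_mul (abs_nonneg _)]
    norm_num
  calc ∑ p ∈ univ.filter (fun p : ι × ι => p.1 < p.2), |b p.1 - b p.2| ^ q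
      ≤ ∑ p ∈ univ.filter (fun p : ι × ι => p.1 < p.2), 2 ^ (q - 2) * (φ (b p.1) - φ (b p.2)) ^ 2 :=
        sum_le_sum fun p _ => abs_sub_rpow_le_mul_sq_signedRpow_sub hq _ _
    _ ≤ 2 ^ (q - 2) * (Fintype.card ι * ∑ i, φ (b i) ^ 2) := by
        rw [← mul_sum]
        exact mul_le_mul_of_nonneg_left (sum_filter_lt_sub_sq_le (φ ∘ b)) (by positivity)
    _ = Fintype.card ι * 2 ^ (q - 2) * ∑ i, |b i| ^ q := by
        simp only [hφ]
        ring

theorem lp.sum_norm_rpow_le_of_forall_apply {α : Type*} {E : α → Type*}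
    [∀ a, NormedAddCommGroup (E a)] {p : ENNReal} (hp : 0 < p.toReal) {ι κ : Type*}
    (s : Finset ι) (t : Finset κ) (u : ι → lp E p) (w : κ → lp E p) (C : ℝ)
    (h : ∀ a, ∑ i ∈ s, ‖u i a‖ ^ p.toReal ≤ C * ∑ j ∈ t, ‖w j a‖ ^ p.toReal) :
    ∑ i ∈ s, ‖u i‖ ^ p.toReal ≤ C * ∑ j ∈ t, ‖w j‖ ^ p.toReal := by
  have hsum : ∀ x : lp E p, Summable fun a => ‖x a‖ ^ p.toReal := fun x =>
    (lp.memℓp x).summable hp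
  simp only [lp.norm_rpow_eq_tsum hp]
  rw [← Summable.tsum_finsetSum fun i _ => hsum _, ← Summable.tsum_finsetSum fun j _ => hsum _,
    ← tsum_mul_left]
  exact Summable.tsum_le_tsum h (summable_sum fun i _ => hsum _)
    ((summable_sum fun j _ => hsum _).mul_left C)

theorem stmt_6_general (q : ℝ) (hq : 2 ≤ q) (n : ℕ)
    (v : Fin n → lp (fun _ : ℕ => ℝ) (ENNReal.ofReal q)) :
    ∑ p ∈ Finset.univ.filter (fun p : Fin n × Fin n => p.1 < p.2),
        ‖v p.1 - v p.2‖ ^ q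
      ≤ n * 2 ^ (q - 2) * ∑ i, ‖v i‖ ^ q := by
  have hq' : (ENNReal.ofReal q).toReal = q := ENNReal.toReal_ofReal (by linarith)
  have key := lp.sum_norm_rpow_le_of_forall_apply (by rw [hq']; linarith) _ _
    (fun p : Fin n × Fin n => v p.1 - v p.2) v (n * 2 ^ (q - 2))
    fun k => by simpa [hq'] using sum_filter_lt_abs_sub_rpow_le hq fun i => v i k
  rwa [hq'] at key

/-- For `2 ≤ q < ∞` and vectors `v₁,…,vₙ` in `ℓ^q`,
`∑_{i<j} ‖vᵢ - vⱼ‖_q^q ≤ n · 2^{q-2} · ∑ᵢ ‖vᵢ‖_q^q`. -/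
theorem stmt_6 (q : ℝ) (hq : 2 ≤ q) (n : ℕ) (hn : 2 ≤ n)
    (v : Fin n → lp (fun _ : ℕ => ℝ) (ENNReal.ofReal q)) :
    ∑ p ∈ Finset.univ.filter (fun p : Fin n × Fin n => p.1 < p.2),
        ‖v p.1 - v p.2‖ ^ q
      ≤ n * 2 ^ (q - 2) * ∑ i, ‖v i‖ ^ q :=
  stmt_6_general q hq n v
end

section
/- For 1 < q < 2 and any vectors v_1,...,v_n in ℓ^q, ∑_{1≤i<j≤n} ‖v_i - v_j‖_q^q ≤ n^{q-1}·(n-1)^{2-q}·∑_{i=1}^n ‖v_i‖_q^q. -/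
open Finset Complex

section Aux

noncomputable abbrev Complex.abs : AbsoluteValue ℂ ℝ := NormedField.toAbsoluteValue ℂ

lemma Complex.norm_eq_abs (z : ℂ) : ‖z‖ = Complex.abs z := rfl

lemma Complex.abs_ofReal (x : ℝ) : Complex.abs (x : ℂ) = |x| := by
  show ‖(x : ℂ)‖ = |x|; simp

lemma Complex.abs_exp (z : ℂ) : Complex.abs (Complex.exp z) = Real.exp z.re :=
  Complex.norm_exp z

lemma Complex.sq_abs (z : ℂ) : Complex.abs z ^ 2 = Complex.normSq z := Complex.sq_norm z

section helpers
lemma rpow_le_max {x t s : ℝ} (hx : 0 ≤ x) (ht : 0 ≤ t) (hts : t ≤ s) :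
    x ^ t ≤ max 1 (x ^ s) := by
  rcases le_total x 1 with h | h
  · exact le_max_of_le_left (Real.rpow_le_one hx h ht)
  · exact le_max_of_le_right (Real.rpow_le_rpow_of_exponent_le h hts)

lemma normG_ne {c : ℝ} (hc : c ≠ 0) (w : ℂ) :
    Complex.abs ((c:ℂ) * Complex.exp (w * (Real.log |c| : ℂ))) = |c| ^ (1 + w.re) := by
  have habs : (0:ℝ) < |c| := abs_pos.mpr hc
  rw [map_mul, Complex.abs_exp, Complex.abs_ofReal]
  have hre : (w * (Real.log |c| : ℂ)).re = w.re * Real.log |c| := by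
    simp [Complex.mul_re]
  rw [hre, Real.rpow_def_of_pos habs]
  rw [show Real.log |c| * (1 + w.re) = Real.log |c| + w.re * Real.log |c| by ring,
    Real.exp_add, Real.exp_log habs]

lemma normG_bound {c : ℝ} {w : ℂ} {s : ℝ} (h0 : 0 ≤ 1 + w.re) (h1 : 1 + w.re ≤ s) :
    Complex.abs ((c:ℂ) * Complex.exp (w * (Real.log |c| : ℂ))) ≤ max 1 (|c| ^ s) := by
  rcases eq_or_ne c 0 with rfl | hc
  · simp
  · rw [normG_ne hc]
    exact rpow_le_max (abs_nonneg c) h0 h1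

lemma normG_eq {c : ℝ} {w : ℂ} {e : ℝ} (hwe : 1 + w.re = e) (he : e ≠ 0) :
    Complex.abs ((c:ℂ) * Complex.exp (w * (Real.log |c| : ℂ))) = |c| ^ e := by
  rcases eq_or_ne c 0 with rfl | hc
  · simp [Real.zero_rpow he]
  · rw [normG_ne hc, hwe]
end helpers


section pairslemmas
variable {n : ℕ}

lemma sum_pairs_symm (F : Fin n × Fin n → ℝ) (h : ∀ i j, F (i,j) = F (j,i)) :
    2 * ∑ p ∈ univ.filter (fun p : Fin n × Fin n => p.1 < p.2), F p
      = ∑ p, F p - ∑ i, F (i,i) := by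
  have h1 : ∑ p ∈ univ.filter (fun p : Fin n × Fin n => p.2 < p.1), F p
      = ∑ p ∈ univ.filter (fun p : Fin n × Fin n => p.1 < p.2), F p := by
    apply Finset.sum_nbij' (fun p => Prod.swap p) (fun p => Prod.swap p) <;>
      simp_all [Prod.swap]
  have h3 : ∑ p ∈ univ.filter (fun p : Fin n × Fin n => ¬ p.1 < p.2 ∧ ¬ p.2 < p.1), F p
      = ∑ i, F (i,i) := by
    apply Finset.sum_nbij' (fun p => p.1) (fun i => (i,i)) <;> simp_all
    · intro a b h1 h2; omega
    · intro a b h1 h2; have : a = b := by omega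
      subst this; rfl
  have split1 := Finset.sum_filter_add_sum_filter_not univ (fun p : Fin n × Fin n => p.1 < p.2) F
  have split2 := Finset.sum_filter_add_sum_filter_not
    (univ.filter (fun p : Fin n × Fin n => ¬ p.1 < p.2)) (fun p => p.2 < p.1) F
  rw [Finset.filter_filter, Finset.filter_filter] at split2
  have e1 : (univ.filter fun p : Fin n × Fin n => ¬p.1 < p.2 ∧ p.2 < p.1)
      = univ.filter (fun p : Fin n × Fin n => p.2 < p.1) := by
    apply Finset.filter_congr; intro p _; constructor
    · exact fun hp => hp.2
    · exact fun hp => ⟨fun h2 => absurd hp (lt_asymm h2), hp⟩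
  rw [e1, h1, h3] at split2
  linarith

lemma sum_pairs_add (f : Fin n → ℝ) :
    ∑ p ∈ univ.filter (fun p : Fin n × Fin n => p.1 < p.2), (f p.1 + f p.2)
      = ((n:ℝ) - 1) * ∑ i, f i := by
  have h := sum_pairs_symm (fun p => f p.1 + f p.2) (by intro i j; simp [add_comm])
  have huniv : ∑ p : Fin n × Fin n, (f p.1 + f p.2) = 2 * (n * ∑ i, f i) := by
    rw [← Finset.univ_product_univ, Finset.sum_product]
    simp [Finset.sum_add_distrib, Finset.mul_sum, ← Finset.sum_mul]
    rw [← Finset.sum_add_distrib]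
    exact Finset.sum_congr rfl (fun i _ => by ring)
  have hdiag : ∑ i : Fin n, (f i + f i) = 2 * ∑ i, f i := by
    rw [Finset.sum_add_distrib]; ring
  simp only at h
  rw [huniv, hdiag] at h
  linarith

lemma sum_pairs_sq (x : Fin n → ℝ) :
    ∑ p ∈ univ.filter (fun p : Fin n × Fin n => p.1 < p.2), (x p.1 - x p.2)^2
      ≤ (n:ℝ) * ∑ i, (x i)^2 := by
  have h := sum_pairs_symm (fun p => (x p.1 - x p.2)^2) (by intro i j; simp; ring)
  have huniv : ∑ p : Fin n × Fin n, (x p.1 - x p.2)^2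
      = 2 * ((n:ℝ) * ∑ i, (x i)^2) - 2 * (∑ i, x i)^2 := by
    rw [← Finset.univ_product_univ, Finset.sum_product]
    have e : ∀ i, ∑ j, (x i - x j)^2
        = (n:ℝ) * (x i)^2 + (∑ j, (x j)^2 - 2 * (x i * ∑ j, x j)) := by
      intro i
      have e2 : ∀ j, (x i - x j)^2 = (x i)^2 + ((x j)^2 - 2 * (x i * x j)) := by
        intro j; ring
      simp_rw [e2, Finset.sum_add_distrib, Finset.sum_sub_distrib, ← Finset.mul_sum]
      rw [Finset.sum_const, Finset.card_univ, Fintype.card_fin, nsmul_eq_mul]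
    simp_rw [e]
    rw [Finset.sum_add_distrib, Finset.sum_sub_distrib]
    simp_rw [← Finset.mul_sum]
    rw [← Finset.sum_mul, Finset.sum_const, Finset.card_univ, Fintype.card_fin, nsmul_eq_mul]
    ring
  simp only [sub_self] at h
  rw [huniv] at h
  have h0 : ∑ i : Fin n, ((0:ℝ))^2 = 0 := by simp
  rw [h0] at h
  nlinarith [sq_nonneg (∑ i, x i)]


variable {n : ℕ}

lemma sum_pairs_abs_sq (c : Fin n → ℂ) :
    ∑ p ∈ univ.filter (fun p : Fin n × Fin n => p.1 < p.2), (Complex.abs (c p.1 - c p.2))^2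
      ≤ (n:ℝ) * ∑ k, (Complex.abs (c k))^2 := by
  have hre := sum_pairs_sq (fun k => (c k).re)
  have him := sum_pairs_sq (fun k => (c k).im)
  have e1 : ∀ z : ℂ, (Complex.abs z)^2 = z.re^2 + z.im^2 := by
    intro z; rw [Complex.sq_abs, Complex.normSq_apply]; ring
  simp_rw [e1, Complex.sub_re, Complex.sub_im]
  rw [Finset.sum_add_distrib, Finset.sum_add_distrib, mul_add]
  exact add_le_add hre him

end pairslemmas

set_option maxHeartbeats 1000000 in
lemma scalar_key (q : ℝ) (hq1 : 1 < q) (hq2 : q < 2) (n : ℕ) (hn : 2 ≤ n) (a : Fin n → ℝ) :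
    ∑ p ∈ univ.filter (fun p : Fin n × Fin n => p.1 < p.2), |a p.1 - a p.2| ^ q
      ≤ (n : ℝ) ^ (q - 1) * ((n : ℝ) - 1) ^ (2 - q) * ∑ i, |a i| ^ q := by
  have hq0 : (0:ℝ) < q := by linarith
  have hN2 : (2:ℝ) ≤ (n:ℝ) := by exact_mod_cast hn
  have hN0 : (0:ℝ) < n := by linarith
  have hN1 : (0:ℝ) < (n:ℝ) - 1 := by linarith
  set Pr : Finset (Fin n × Fin n) := univ.filter (fun p : Fin n × Fin n => p.1 < p.2) with hPr
  set d : Fin n × Fin n → ℝ := fun p => a p.1 - a p.2 with hd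
  set Asum : ℝ := ∑ i, |a i| ^ q with hAsum
  set B : ℝ := ∑ p ∈ Pr, |d p| ^ q with hB
  have hAsum_nonneg : 0 ≤ Asum := by
    apply Finset.sum_nonneg; intro i _; positivity
  have hB_nonneg : 0 ≤ B := by
    apply Finset.sum_nonneg; intro p _; positivity
  have hRHS_nonneg : 0 ≤ (n : ℝ) ^ (q - 1) * ((n : ℝ) - 1) ^ (2 - q) * Asum := by
    positivity
  show B ≤ (n : ℝ) ^ (q - 1) * ((n : ℝ) - 1) ^ (2 - q) * Asum
  rcases eq_or_lt_of_le hB_nonneg with hB0 | hBpos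
  · linarith
  -- Asum positive
  have hApos : 0 < Asum := by
    rcases eq_or_lt_of_le hAsum_nonneg with hA0 | h
    · exfalso
      have hzero : ∀ i, a i = 0 := by
        intro i
        have hterm := (Finset.sum_eq_zero_iff_of_nonneg
          (fun i _ => by positivity : ∀ i ∈ univ, (0:ℝ) ≤ |a i| ^ q)).mp hA0.symm i (mem_univ i)
        have h2 : |a i| = 0 := by
          by_contra hne
          have hpos : 0 < |a i| ^ q :=
            Real.rpow_pos_of_pos ((abs_nonneg _).lt_of_ne (Ne.symm hne)) q
          linarith
        simpa [abs_eq_zero] using h2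
      have : B = 0 := by
        apply Finset.sum_eq_zero
        intro p _
        simp [hd, hzero p.1, hzero p.2, Real.zero_rpow hq0.ne']
      linarith
    · exact h
  -- setup for three lines
  set θ : ℝ := 2 * (q - 1) / q with hθ
  have hθ0 : 0 < θ := by
    apply div_pos <;> linarith
  have hθ1 : θ < 1 := by
    rw [hθ, div_lt_one hq0]; linarith
  set A : Fin n → ℂ → ℂ := fun k z =>
    ((a k : ℝ) : ℂ) * Complex.exp ((((q-1 : ℝ) : ℂ) - ((q/2 : ℝ) : ℂ) * z) * (Real.log |a k| : ℂ))
    with hA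
  set Bf : (Fin n × Fin n) → ℂ → ℂ := fun p z =>
    ((d p : ℝ) : ℂ) * Complex.exp ((((q/2 : ℝ) : ℂ) * z - 1) * (Real.log |d p| : ℂ)) with hBf
  set F : ℂ → ℂ := fun z => ∑ p ∈ Pr, Bf p z * (A p.1 z - A p.2 z) with hF
  -- exponent real parts
  have hwA : ∀ z : ℂ, 1 + ((((q-1 : ℝ) : ℂ) - ((q/2 : ℝ) : ℂ) * z)).re = q - q/2 * z.re := by
    intro z; simp [Complex.sub_re, Complex.mul_re]; ring
  have hwB : ∀ z : ℂ, 1 + ((((q/2 : ℝ) : ℂ) * z - 1)).re = q/2 * z.re := by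
    intro z; simp [Complex.sub_re, Complex.mul_re]
  -- differentiability
  have hdiff : Differentiable ℂ F := by
    apply Differentiable.fun_sum
    intro p _
    apply Differentiable.mul
    · apply Differentiable.mul (differentiable_const _)
      apply Complex.differentiable_exp.comp
      fun_prop
    · apply Differentiable.sub <;>
      · apply Differentiable.mul (differentiable_const _)
        apply Complex.differentiable_exp.comp
        fun_prop
  -- boundedness on the closed strip
  have hBdd : BddAbove ((norm ∘ F) '' (Complex.HadamardThreeLines.verticalClosedStrip 0 1)) := by
    rw [bddAbove_def]
    refine ⟨∑ p ∈ Pr, (max 1 (|d p| ^ (q/2))) * (max 1 (|a p.1| ^ q) + max 1 (|a p.2| ^ q)), ?_⟩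
    rintro y ⟨z, hz, rfl⟩
    simp only [Function.comp_apply, Complex.norm_eq_abs]
    calc Complex.abs (F z) ≤ ∑ p ∈ Pr, Complex.abs (Bf p z * (A p.1 z - A p.2 z)) := by
          exact Complex.abs.sum_le _ _
      _ ≤ _ := by
          apply Finset.sum_le_sum
          intro p _
          rw [map_mul]
          have hz01 : 0 ≤ z.re ∧ z.re ≤ 1 := hz
          have hb1 : Complex.abs (Bf p z) ≤ max 1 (|d p| ^ (q/2)) := by
            apply normG_bound (s := q/2) <;> rw [hwB z] <;> nlinarith [hz01.1, hz01.2]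
          have ha1 : ∀ k, Complex.abs (A k z) ≤ max 1 (|a k| ^ q) := by
            intro k
            apply normG_bound (s := q) <;> rw [hwA z] <;> nlinarith [hz01.1, hz01.2]
          have htri : Complex.abs (A p.1 z - A p.2 z)
              ≤ max 1 (|a p.1| ^ q) + max 1 (|a p.2| ^ q) := by
            calc Complex.abs (A p.1 z - A p.2 z)
                ≤ Complex.abs (A p.1 z) + Complex.abs (A p.2 z) := by
                  simpa [Complex.norm_eq_abs] using norm_sub_le (A p.1 z) (A p.2 z)
              _ ≤ _ := add_le_add (ha1 p.1) (ha1 p.2)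
          have h0b : (0:ℝ) ≤ Complex.abs (A p.1 z - A p.2 z) := AbsoluteValue.nonneg _ _
          exact mul_le_mul hb1 htri h0b (le_trans zero_le_one (le_max_left _ _))
  -- norm of A on strip
  have habsA : ∀ (k : Fin n) (z : ℂ), z.re ≤ 1 → Complex.abs (A k z) = |a k| ^ (q - q/2 * z.re) := by
    intro k z hz
    apply normG_eq (hwA z)
    nlinarith
  -- edge 0 bound
  have hedge0 : ∀ z : ℂ, z.re = 0 → Complex.abs (F z) ≤ ((n:ℝ) - 1) * Asum := by
    intro z hz
    calc Complex.abs (F z) ≤ ∑ p ∈ Pr, Complex.abs (Bf p z * (A p.1 z - A p.2 z)) :=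
          Complex.abs.sum_le _ _
      _ ≤ ∑ p ∈ Pr, (|a p.1| ^ q + |a p.2| ^ q) := by
          apply Finset.sum_le_sum
          intro p _
          rw [map_mul]
          have hb1 : Complex.abs (Bf p z) ≤ 1 := by
            rcases eq_or_ne (d p) 0 with h0 | h0
            · simp [hBf, h0]
            · rw [hBf]
              simp only
              rw [normG_ne h0]
              have he : 1 + ((((q/2 : ℝ) : ℂ) * z - 1)).re = 0 := by rw [hwB z, hz]; ring
              rw [show (1 : ℝ) + (((q/2 : ℝ) : ℂ) * z - 1).re = 1 + (((q/2 : ℝ) : ℂ) * z - 1).re from rfl, he, Real.rpow_zero]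
          have htri : Complex.abs (A p.1 z - A p.2 z) ≤ |a p.1| ^ q + |a p.2| ^ q := by
            calc Complex.abs (A p.1 z - A p.2 z)
                ≤ Complex.abs (A p.1 z) + Complex.abs (A p.2 z) := by
                  simpa [Complex.norm_eq_abs] using norm_sub_le (A p.1 z) (A p.2 z)
              _ = |a p.1| ^ q + |a p.2| ^ q := by
                  rw [habsA p.1 z (by rw [hz]; norm_num), habsA p.2 z (by rw [hz]; norm_num), hz]
                  ring_nf
          calc Complex.abs (Bf p z) * Complex.abs (A p.1 z - A p.2 z)
              ≤ 1 * (|a p.1| ^ q + |a p.2| ^ q) :=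
                mul_le_mul hb1 htri (AbsoluteValue.nonneg _ _) zero_le_one
            _ = |a p.1| ^ q + |a p.2| ^ q := one_mul _
      _ = ((n:ℝ) - 1) * Asum := sum_pairs_add (fun i => |a i| ^ q)
  -- edge 1 bound
  have hedge1 : ∀ z : ℂ, z.re = 1 →
      Complex.abs (F z) ≤ Real.sqrt B * Real.sqrt ((n:ℝ) * Asum) := by
    intro z hz
    have hsq : ∀ x : ℝ, 0 ≤ x → (x ^ (q/2)) ^ (2:ℕ) = x ^ q := by
      intro x hx
      rw [← Real.rpow_natCast (x ^ (q/2)) 2, ← Real.rpow_mul hx]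
      norm_num
    have hBsq : ∑ p ∈ Pr, (Complex.abs (Bf p z)) ^ (2:ℕ) = B := by
      apply Finset.sum_congr rfl
      intro p _
      have : Complex.abs (Bf p z) = |d p| ^ (q/2) := by
        rw [hBf]
        simp only
        apply normG_eq
        · rw [hwB z, hz]; ring
        · positivity
      rw [this, hsq _ (abs_nonneg _)]
    have hAsq : ∑ p ∈ Pr, (Complex.abs (A p.1 z - A p.2 z)) ^ (2:ℕ)
        ≤ (n:ℝ) * Asum := by
      calc ∑ p ∈ Pr, (Complex.abs (A p.1 z - A p.2 z)) ^ (2:ℕ)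
          ≤ (n:ℝ) * ∑ k, (Complex.abs (A k z)) ^ (2:ℕ) := sum_pairs_abs_sq (fun k => A k z)
        _ = (n:ℝ) * Asum := by
            congr 1
            apply Finset.sum_congr rfl
            intro k _
            rw [habsA k z (le_of_eq hz), hz]
            rw [show q - q/2 * 1 = q/2 by ring]
            exact hsq _ (abs_nonneg _)
    calc Complex.abs (F z) ≤ ∑ p ∈ Pr, Complex.abs (Bf p z * (A p.1 z - A p.2 z)) :=
          Complex.abs.sum_le _ _
      _ = ∑ p ∈ Pr, Complex.abs (Bf p z) * Complex.abs (A p.1 z - A p.2 z) := by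
          apply Finset.sum_congr rfl; intro p _; rw [map_mul]
      _ ≤ Real.sqrt (∑ p ∈ Pr, (Complex.abs (Bf p z)) ^ 2)
            * Real.sqrt (∑ p ∈ Pr, (Complex.abs (A p.1 z - A p.2 z)) ^ 2) :=
          Real.sum_mul_le_sqrt_mul_sqrt _ _ _
      _ ≤ Real.sqrt B * Real.sqrt ((n:ℝ) * Asum) := by
          apply mul_le_mul
          · rw [hBsq]
          · exact Real.sqrt_le_sqrt hAsq
          · exact Real.sqrt_nonneg _
          · exact Real.sqrt_nonneg _
  have hqne : q ≠ 0 := ne_of_gt hq0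
  -- value at θ
  have hwA0 : (((q-1 : ℝ) : ℂ) - ((q/2 : ℝ) : ℂ) * ((θ:ℝ):ℂ)) = 0 := by
    have h : (q - 1) - (q/2) * θ = 0 := by rw [hθ]; field_simp; ring
    calc (((q-1 : ℝ) : ℂ) - ((q/2 : ℝ) : ℂ) * ((θ:ℝ):ℂ))
        = ((q - 1 - q/2*θ : ℝ) : ℂ) := by push_cast; ring
      _ = 0 := by rw [h]; norm_num
  have hwB0 : (((q/2 : ℝ) : ℂ) * ((θ:ℝ):ℂ) - 1) = (((q - 2 : ℝ)) : ℂ) := by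
    have h : (q/2) * θ - 1 = q - 2 := by rw [hθ]; field_simp; ring
    calc (((q/2 : ℝ) : ℂ) * ((θ:ℝ):ℂ) - 1) = ((q/2*θ - 1 : ℝ) : ℂ) := by push_cast; ring
      _ = _ := by rw [h]
  have hAθ : ∀ k, A k ((θ:ℝ):ℂ) = ((a k : ℝ) : ℂ) := by
    intro k
    rw [hA]
    simp only
    rw [hwA0]
    simp
  have hterm : ∀ p : Fin n × Fin n,
      Bf p ((θ:ℝ):ℂ) * (((a p.1 : ℝ) : ℂ) - ((a p.2 : ℝ) : ℂ)) = ((|d p| ^ q : ℝ) : ℂ) := by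
    intro p
    rw [hBf]
    simp only
    rw [hwB0]
    have hΔ : (((a p.1 : ℝ) : ℂ) - ((a p.2 : ℝ) : ℂ)) = ((d p : ℝ) : ℂ) := by
      rw [hd]; push_cast; ring
    rw [hΔ]
    rcases eq_or_ne (d p) 0 with h0 | h0
    · simp [h0, Real.zero_rpow hqne]
    · have habs : (0:ℝ) < |d p| := abs_pos.mpr h0
      have hc : (((q-2 : ℝ)) : ℂ) * ((Real.log |d p| : ℝ) : ℂ)
          = ((((q-2) * Real.log |d p|) : ℝ) : ℂ) := by push_cast; ring
      rw [hc, ← Complex.ofReal_exp, ← Complex.ofReal_mul, ← Complex.ofReal_mul]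
      congr 1
      have hexp : Real.exp ((q-2) * Real.log |d p|) = |d p| ^ (q-2) := by
        rw [Real.rpow_def_of_pos habs, mul_comm]
      rw [hexp]
      have h2 : d p * |d p| ^ (q-2) * d p = |d p|^(2:ℕ) * |d p|^(q-2) := by
        rw [_root_.sq_abs]; ring
      rw [h2, ← Real.rpow_natCast |d p| 2, ← Real.rpow_add habs]
      norm_num
  have hFθval : F ((θ:ℝ):ℂ) = ((B:ℝ):ℂ) := by
    rw [hF]
    simp only
    calc ∑ p ∈ Pr, Bf p ((θ:ℝ):ℂ) * (A p.1 ((θ:ℝ):ℂ) - A p.2 ((θ:ℝ):ℂ))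
        = ∑ p ∈ Pr, ((|d p| ^ q : ℝ) : ℂ) :=
          Finset.sum_congr rfl (fun p _ => by rw [hAθ p.1, hAθ p.2, hterm p])
      _ = ((B:ℝ):ℂ) := by rw [hB, Complex.ofReal_sum]
  have hFθ : Complex.abs (F ((θ:ℝ):ℂ)) = B := by
    rw [hFθval, Complex.abs_ofReal, _root_.abs_of_nonneg hB_nonneg]
  -- apply Hadamard three lines
  have hmem : ((θ:ℝ):ℂ) ∈ Complex.HadamardThreeLines.verticalClosedStrip 0 1 := by
    simp only [Complex.HadamardThreeLines.verticalClosedStrip, Set.mem_preimage,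
      Complex.ofReal_re, Set.mem_Icc]
    exact ⟨hθ0.le, hθ1.le⟩
  have hHad := Complex.HadamardThreeLines.norm_le_interp_of_mem_verticalClosedStrip₀₁' F hmem
    (hdiff.diffContOnCl) hBdd
    (fun z hz => by
      rw [Complex.norm_eq_abs]; exact hedge0 z (by simpa using hz))
    (fun z hz => by
      rw [Complex.norm_eq_abs]; exact hedge1 z (by simpa using hz))
  rw [Complex.norm_eq_abs, hFθ, Complex.ofReal_re] at hHad
  -- final algebra
  have hNA : (0:ℝ) < (n:ℝ) * Asum := by positivity
  have h1 : (Real.sqrt B * Real.sqrt ((n:ℝ)*Asum)) ^ θ = B^(θ/2) * ((n:ℝ)*Asum)^(θ/2) := by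
    rw [Real.mul_rpow (Real.sqrt_nonneg _) (Real.sqrt_nonneg _), Real.sqrt_eq_rpow,
      Real.sqrt_eq_rpow, ← Real.rpow_mul hB_nonneg, ← Real.rpow_mul hNA.le,
      show 1/2*θ = θ/2 by ring]
  rw [h1] at hHad
  have hmain2 : B ≤ (((n:ℝ)-1)*Asum)^(1-θ) * ((n:ℝ)*Asum)^(θ/2) * B^(θ/2) := by
    have he : (((n:ℝ)-1)*Asum)^(1-θ) * (B^(θ/2) * ((n:ℝ)*Asum)^(θ/2))
        = (((n:ℝ)-1)*Asum)^(1-θ) * ((n:ℝ)*Asum)^(θ/2) * B^(θ/2) := by ring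
    exact hHad.trans (le_of_eq he)
  set K : ℝ := (((n:ℝ)-1)*Asum)^(1-θ) * ((n:ℝ)*Asum)^(θ/2) with hK
  have hcancel : B^(1-θ/2) ≤ K := by
    have hmulB : B^(1-θ/2) * B^(θ/2) = B := by
      rw [← Real.rpow_add hBpos, show (1-θ/2)+(θ/2) = 1 by ring, Real.rpow_one]
    have h3 : B^(1-θ/2) * B^(θ/2) ≤ K * B^(θ/2) := by rw [hmulB]; exact hmain2
    exact le_of_mul_le_mul_right h3 (Real.rpow_pos_of_pos hBpos _)
  have hq' : (B^(1-θ/2))^q ≤ K^q :=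
    Real.rpow_le_rpow (Real.rpow_nonneg hB_nonneg _) hcancel hq0.le
  have hBq : (B^(1-θ/2))^q = B := by
    rw [← Real.rpow_mul hB_nonneg]
    rw [show (1-θ/2)*q = 1 from by rw [hθ]; field_simp; ring, Real.rpow_one]
  have hX : (0:ℝ) ≤ ((n:ℝ)-1)*Asum := by positivity
  have hKq : K^q = (n:ℝ)^(q-1) * ((n:ℝ)-1)^(2-q) * Asum := by
    rw [hK, Real.mul_rpow (Real.rpow_nonneg hX _) (Real.rpow_nonneg hNA.le _),
      ← Real.rpow_mul hX, ← Real.rpow_mul hNA.le,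
      show (1-θ)*q = 2-q from by rw [hθ]; field_simp; ring,
      show (θ/2)*q = q-1 from by rw [hθ]; field_simp,
      Real.mul_rpow hN1.le hAsum_nonneg, Real.mul_rpow hN0.le hAsum_nonneg,
      show ((n:ℝ)-1)^(2-q) * Asum^(2-q) * ((n:ℝ)^(q-1) * Asum^(q-1))
        = (n:ℝ)^(q-1) * ((n:ℝ)-1)^(2-q) * (Asum^(2-q) * Asum^(q-1)) from by ring,
      ← Real.rpow_add hApos, show (2-q)+(q-1) = 1 by ring, Real.rpow_one]
  rw [hBq, hKq] at hq'
  exact hq'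


end Aux


/-- For `1 < q < 2` and vectors `v₁,…,vₙ` in `ℓ^q`,
`∑_{i<j} ‖vᵢ - vⱼ‖_q^q ≤ n^{q-1} · (n-1)^{2-q} · ∑ᵢ ‖vᵢ‖_q^q`. -/

theorem stmt_7 (q : ℝ) (hq1 : 1 < q) (hq2 : q < 2) (n : ℕ) (hn : 2 ≤ n)
    (v : Fin n → lp (fun _ : ℕ => ℝ) (ENNReal.ofReal q)) :
    ∑ p ∈ Finset.univ.filter (fun p : Fin n × Fin n => p.1 < p.2),
        ‖v p.1 - v p.2‖ ^ q
      ≤ (n : ℝ) ^ (q - 1) * ((n : ℝ) - 1) ^ (2 - q) * ∑ i, ‖v i‖ ^ q := by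
  have hq0 : (0:ℝ) < q := by linarith
  have htr : (ENNReal.ofReal q).toReal = q := ENNReal.toReal_ofReal hq0.le
  have hptoReal : 0 < (ENNReal.ofReal q).toReal := by rw [htr]; exact hq0
  have hnorm : ∀ f : lp (fun _ : ℕ => ℝ) (ENNReal.ofReal q), ‖f‖ ^ q = ∑' k, |f k| ^ q := by
    intro f
    have h := lp.norm_rpow_eq_tsum hptoReal f
    rw [htr] at h
    simpa [Real.norm_eq_abs] using h
  have hsumm : ∀ f : lp (fun _ : ℕ => ℝ) (ENNReal.ofReal q),
      Summable (fun k => |f k| ^ q) := by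
    intro f
    have h := (lp.memℓp f).summable hptoReal
    rw [htr] at h
    simpa [Real.norm_eq_abs] using h
  set Pr : Finset (Fin n × Fin n) := univ.filter (fun p : Fin n × Fin n => p.1 < p.2) with hPr
  have hcoe : ∀ (i j : Fin n) (k : ℕ), (v i - v j) k = v i k - v j k := by
    intro i j k
    rw [lp.coeFn_sub]
    rfl
  have hsumm2 : ∀ p : Fin n × Fin n, Summable (fun k => |v p.1 k - v p.2 k| ^ q) := by
    intro p
    apply (hsumm (v p.1 - v p.2)).congr
    intro k
    rw [hcoe]
  have hstep1 : ∑ p ∈ Pr, ‖v p.1 - v p.2‖ ^ q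
      = ∑' k, ∑ p ∈ Pr, |v p.1 k - v p.2 k| ^ q := by
    rw [Summable.tsum_finsetSum (fun p _ => hsumm2 p)]
    apply Finset.sum_congr rfl
    intro p _
    rw [hnorm (v p.1 - v p.2)]
    apply tsum_congr
    intro k
    rw [hcoe]
  have hstep3 : ∑' k, ((n : ℝ) ^ (q - 1) * ((n : ℝ) - 1) ^ (2 - q) * ∑ i, |v i k| ^ q)
      = (n : ℝ) ^ (q - 1) * ((n : ℝ) - 1) ^ (2 - q) * ∑ i, ‖v i‖ ^ q := by
    rw [tsum_mul_left]
    congr 1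
    rw [Summable.tsum_finsetSum (fun (i : Fin n) _ => hsumm (v i))]
    exact Finset.sum_congr rfl (fun i _ => (hnorm (v i)).symm)
  rw [hstep1, ← hstep3]
  apply Summable.tsum_le_tsum
  · intro k
    exact scalar_key q hq1 hq2 n hn (fun i => v i k)
  · exact summable_sum (fun p _ => hsumm2 p)
  · exact (summable_sum (fun (i : Fin n) _ => hsumm (v i))).mul_left _
end

section
/- Let 1 < q < 2 and R < 2^{-1/q}. If v_1,...,v_n are vectors in ℓ^q with ‖v_i‖_q ≤ R for all i and ‖v_i - v_j‖_q ≥ 1 for all i ≠ j, then n ≤ ⌊1/(1 - (2R^q)^{1/(q-1)})⌋. -/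
open Finset

lemma sign_mul_abs' (x : ℝ) : Real.sign x * |x| = x := by
  rcases lt_trichotomy x 0 with h | h | h
  · rw [Real.sign_of_neg h, abs_of_neg h]; ring
  · simp [h]
  · rw [Real.sign_of_pos h, abs_of_pos h]; ring

lemma sign_mul_self' (x : ℝ) : Real.sign x * x = |x| := by
  rcases lt_trichotomy x 0 with h | h | h
  · rw [Real.sign_of_neg h, abs_of_neg h]; ring
  · simp [h]
  · rw [Real.sign_of_pos h, abs_of_pos h]; ring

noncomputable def pw (x : ℝ) (w : ℂ) : ℂ :=
  if x = 0 then 0 else (Real.sign x : ℂ) * Complex.exp (w * Real.log |x|)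

lemma pw_norm (x : ℝ) (w : ℂ) : ‖pw x w‖ = if x = 0 then 0 else |x| ^ w.re := by
  unfold pw
  split_ifs with h
  · simp
  · rw [norm_mul, Complex.norm_exp, Complex.norm_real, Real.norm_eq_abs]
    have h1 : |Real.sign x| = 1 := by
      rcases Real.sign_apply_eq_of_ne_zero x h with h2 | h2 <;> rw [h2] <;> norm_num
    have h2 : (w * (Real.log |x| : ℂ)).re = Real.log |x| * w.re := by
      simp [Complex.mul_re]; ring
    rw [h1, one_mul, h2, Real.rpow_def_of_pos (abs_pos.2 h)]

lemma pw_zero_base (w : ℂ) : pw 0 w = 0 := by simp [pw]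

lemma pw_real (x : ℝ) (t : ℝ) (hx : x ≠ 0) :
    pw x (t : ℂ) = ((Real.sign x * |x| ^ t : ℝ) : ℂ) := by
  unfold pw
  rw [if_neg hx]
  have : ((t:ℂ) * (Real.log |x| : ℂ)) = ((t * Real.log |x| : ℝ) : ℂ) := by push_cast; ring
  rw [this, ← Complex.ofReal_exp, Real.rpow_def_of_pos (abs_pos.2 hx)]
  push_cast
  ring_nf

lemma pw_one (x : ℝ) : pw x 1 = (x : ℂ) := by
  rcases eq_or_ne x 0 with h | h
  · simp [h, pw_zero_base]
  · have := pw_real x 1 h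
    rw [show ((1:ℝ):ℂ) = 1 by norm_num] at this
    rw [this, Real.rpow_one, sign_mul_abs']

lemma pw_differentiable (x : ℝ) {f : ℂ → ℂ} (hf : Differentiable ℂ f) :
    Differentiable ℂ (fun z => pw x (f z)) := by
  unfold pw
  split_ifs with h
  · exact differentiable_const 0
  · exact (differentiable_const _).mul ((hf.mul (differentiable_const _)).cexp)

lemma real_l2 (n : ℕ) (x : Fin n → ℝ) :
    ∑ i, ∑ j, (x i - x j)^2 ≤ 2 * n * ∑ i, x i ^ 2 := by
  have key : ∑ i, ∑ j, (x i - x j)^2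
      = 2 * n * ∑ i, x i ^ 2 - 2 * (∑ i, x i)^2 := by
    have expand : ∀ i j : Fin n, (x i - x j)^2 = x i ^2 + x j ^2 - 2*(x i * x j) := by
      intros; ring
    simp_rw [expand, Finset.sum_sub_distrib, Finset.sum_add_distrib, Finset.sum_const,
      Finset.card_univ, Fintype.card_fin, ← Finset.mul_sum, ← Finset.sum_mul, nsmul_eq_mul]
    rw [show ∑ i : Fin n, (n:ℝ) * x i ^2 = (n:ℝ) * ∑ i, x i ^2 from (Finset.mul_sum _ _ _).symm]
    ring
  rw [key]
  nlinarith [sq_nonneg (∑ i, x i)]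

lemma complex_l2 (n : ℕ) (u : Fin n → ℂ) :
    ∑ i, ∑ j, ‖u i - u j‖^2 ≤ 2 * n * ∑ i, ‖u i‖ ^ 2 := by
  have hre := real_l2 n (fun i => (u i).re)
  have him := real_l2 n (fun i => (u i).im)
  have norm_eq : ∀ w : ℂ, ‖w‖^2 = w.re^2 + w.im^2 := by
    intro w
    rw [← Complex.normSq_eq_norm_sq, Complex.normSq_apply]
    ring
  simp_rw [norm_eq, Complex.sub_re, Complex.sub_im, Finset.sum_add_distrib]
  linarith

lemma pw_norm_eq (x : ℝ) (w : ℂ) (hw : w.re ≠ 0) : ‖pw x w‖ = |x| ^ w.re := by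
  rw [pw_norm]
  split_ifs with h
  · simp [h, Real.zero_rpow hw]
  · rfl

lemma pw_norm_le_one (x : ℝ) (w : ℂ) (hw : w.re = 0) : ‖pw x w‖ ≤ 1 := by
  rw [pw_norm]
  split_ifs with h
  · norm_num
  · rw [hw, Real.rpow_zero]

lemma pw_norm_le_max (x : ℝ) (w : ℂ) (c : ℝ) (h0 : 0 ≤ w.re) (hc : w.re ≤ c) :
    ‖pw x w‖ ≤ max 1 (|x| ^ c) := by
  rw [pw_norm]
  split_ifs with h
  · exact le_trans zero_le_one (le_max_left _ _)
  · rcases le_or_gt 1 |x| with hx | hx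
    · exact le_max_of_le_right (Real.rpow_le_rpow_of_exponent_le hx hc)
    · exact le_max_of_le_left (Real.rpow_le_one (abs_nonneg x) hx.le h0)

set_option maxHeartbeats 1000000 in
theorem key_scalar {q : ℝ} (hq1 : 1 < q) (hq2 : q < 2) (n : ℕ) (a : Fin n → ℝ) :
    ∑ i, ∑ j, |a i - a j| ^ q
      ≤ 2 * ((n:ℝ) - 1) ^ (2 - q) * (n:ℝ) ^ (q - 1) * ∑ i, |a i| ^ q := by
  have hq0 : (0:ℝ) < q := by linarith
  rcases Nat.lt_or_ge n 2 with hn | hn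
  · have hS0 : ∑ i, ∑ j, |a i - a j| ^ q = 0 := by
      apply Finset.sum_eq_zero; intro i _
      apply Finset.sum_eq_zero; intro j _
      have : i = j := by omega
      rw [this, sub_self, abs_zero, Real.zero_rpow hq0.ne']
    rw [hS0]
    have : n = 0 ∨ n = 1 := by omega
    rcases this with h | h <;> subst h
    · simp
    · have h1 : ((1:ℕ):ℝ) - 1 = 0 := by norm_num
      rw [h1, Real.zero_rpow (by linarith : (2:ℝ) - q ≠ 0)]
      simp
  set Sa := ∑ i, |a i| ^ q with hSa_def
  set S := ∑ i, ∑ j, |a i - a j| ^ q with hS_def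
  have hSa_nonneg : 0 ≤ Sa := Finset.sum_nonneg fun i _ => Real.rpow_nonneg (abs_nonneg _) _
  have hS_nonneg : 0 ≤ S :=
    Finset.sum_nonneg fun i _ => Finset.sum_nonneg fun j _ => Real.rpow_nonneg (abs_nonneg _) _
  have hn1 : (1:ℝ) ≤ (n:ℝ) - 1 := by
    have : (2:ℝ) ≤ (n:ℝ) := by exact_mod_cast hn
    linarith
  have hnR : (0:ℝ) < (n:ℝ) := by positivity
  rcases eq_or_lt_of_le hSa_nonneg with hSa0 | hSa_pos
  · -- all a i = 0
    have hzero : ∀ i, a i = 0 := by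
      intro i
      have h1 : ∀ i ∈ Finset.univ, (0:ℝ) ≤ |a i| ^ q :=
        fun i _ => Real.rpow_nonneg (abs_nonneg _) _
      have h2 := (Finset.sum_eq_zero_iff_of_nonneg h1).mp hSa0.symm i (Finset.mem_univ i)
      have := Real.rpow_eq_zero_iff_of_nonneg (abs_nonneg (a i)) |>.mp h2
      exact abs_eq_zero.mp this.1
    have hS0 : S = 0 := by
      rw [hS_def]
      apply Finset.sum_eq_zero; intro i _
      apply Finset.sum_eq_zero; intro j _
      rw [hzero i, hzero j, sub_self, abs_zero, Real.zero_rpow hq0.ne']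
    rw [hS0, ← hSa0]
    simp
  rcases eq_or_lt_of_le hS_nonneg with hS0 | hS_pos
  · rw [← hS0]
    positivity
  -- main case
  set θ : ℝ := 2 - 2/q with hθ_def
  have hθ0 : 0 < θ := by
    have : 2/q < 2 := by rw [div_lt_iff₀ hq0]; nlinarith
    simp only [hθ_def]; linarith
  have hθ1 : θ < 1 := by
    have : 1 < 2/q := by rw [lt_div_iff₀ hq0]; linarith
    simp only [hθ_def]; linarith
  set F : ℂ → ℂ := fun z => ∑ i, ∑ j,
    pw (a i - a j) ((q/2 : ℝ) * z) *
      (pw (a i) ((q:ℝ) - (q/2:ℝ) * z) - pw (a j) ((q:ℝ) - (q/2:ℝ) * z)) with hF_def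
  have hdiff : Differentiable ℂ F := by
    apply Differentiable.fun_sum; intro i _
    apply Differentiable.fun_sum; intro j _
    have h1 : Differentiable ℂ (fun z : ℂ => ((q/2 : ℝ) : ℂ) * z) :=
      (differentiable_const _).mul differentiable_id
    have h2 : Differentiable ℂ (fun z : ℂ => ((q:ℝ) : ℂ) - ((q/2:ℝ) : ℂ) * z) :=
      (differentiable_const _).sub h1
    exact (pw_differentiable _ h1).mul
      ((pw_differentiable _ h2).sub (pw_differentiable _ h2))
  have hFθ : F (θ:ℂ) = ((S:ℝ) : ℂ) := by
    have e1 : ((q/2 : ℝ) : ℂ) * (θ:ℂ) = (((q - 1 : ℝ)) : ℂ) := by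
      have : (q/2) * θ = q - 1 := by rw [hθ_def]; field_simp
      push_cast [← this]; ring
    have e2 : ((q:ℝ) : ℂ) - ((q/2:ℝ) : ℂ) * (θ:ℂ) = 1 := by
      have : q - (q/2) * θ = 1 := by rw [hθ_def]; field_simp; ring
      have h' : ((q:ℝ):ℂ) - (((q/2) * θ : ℝ) : ℂ) = ((1:ℝ):ℂ) := by
        rw [← Complex.ofReal_sub, this]
      push_cast at h' ⊢
      linear_combination h'
    have hterm : ∀ i j : Fin n,
        pw (a i - a j) (((q/2 : ℝ)) * (θ:ℂ)) *
          (pw (a i) ((q:ℝ) - ((q/2:ℝ)) * (θ:ℂ)) - pw (a j) ((q:ℝ) - ((q/2:ℝ)) * (θ:ℂ)))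
        = ((|a i - a j| ^ q : ℝ) : ℂ) := by
      intro i j
      rw [e2, e1, pw_one, pw_one]
      have hsub : ((a i : ℂ)) - ((a j : ℂ)) = (((a i - a j : ℝ)) : ℂ) := by push_cast; ring
      rw [hsub]
      rcases eq_or_ne (a i - a j) 0 with h | h
      · rw [h, pw_zero_base, zero_mul, abs_zero, Real.zero_rpow hq0.ne']
        norm_num
      · rw [pw_real _ _ h, ← Complex.ofReal_mul]
        congr 1
        have : Real.sign (a i - a j) * |a i - a j| ^ (q-1) * (a i - a j)
            = |a i - a j| ^ (q-1) * (Real.sign (a i - a j) * (a i - a j)) := by ring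
        rw [this, sign_mul_self']
        have h3 := (Real.rpow_add (abs_pos.2 h) (q-1) 1).symm
        rw [Real.rpow_one] at h3
        rw [h3]
        norm_num
    rw [hF_def]
    simp only [hterm]
    rw [hS_def]
    push_cast
    rfl
  set M0 : ℝ := 2 * ((n:ℝ) - 1) * Sa with hM0_def
  set M1 : ℝ := Real.sqrt S * Real.sqrt (2 * (n:ℝ) * Sa) with hM1_def
  have hcount : ∑ i, ∑ j, (if i = j then (0:ℝ) else |a i| ^ q + |a j| ^ q)
      = 2 * ((n:ℝ) - 1) * Sa := by
    have step : ∀ i : Fin n, ∑ j, (if i = j then (0:ℝ) else |a i| ^ q + |a j| ^ q)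
        = (∑ j, (|a i| ^ q + |a j| ^ q)) - 2 * |a i| ^ q := by
      intro i
      have : ∀ j : Fin n, (if i = j then (0:ℝ) else |a i| ^ q + |a j| ^ q)
          = (|a i| ^ q + |a j| ^ q) - (if i = j then |a i| ^ q + |a j| ^ q else 0) := by
        intro j; split_ifs <;> ring
      simp_rw [this, Finset.sum_sub_distrib, Finset.sum_ite_eq, Finset.mem_univ, if_true]
      ring
    rw [hSa_def]
    simp_rw [step, Finset.sum_sub_distrib, Finset.sum_add_distrib, Finset.sum_const,
      Finset.card_univ, Fintype.card_fin, nsmul_eq_mul, ← Finset.mul_sum]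
    ring_nf
  have hedge0 : ∀ z ∈ Complex.re ⁻¹' {0}, ‖F z‖ ≤ M0 := by
    intro z hz
    rw [Set.mem_preimage, Set.mem_singleton_iff] at hz
    have hre1 : ((((q/2 : ℝ)) : ℂ) * z).re = 0 := by
      simp [Complex.mul_re, Complex.ofReal_re, Complex.ofReal_im, hz]
    have hre2 : (((q:ℝ) : ℂ) - (((q/2:ℝ)) : ℂ) * z).re = q := by
      simp [Complex.sub_re, Complex.mul_re, Complex.ofReal_re, Complex.ofReal_im, hz]
    rw [hM0_def, ← hcount, hF_def]
    refine le_trans (norm_sum_le _ _) (Finset.sum_le_sum fun i _ => ?_)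
    refine le_trans (norm_sum_le _ _) (Finset.sum_le_sum fun j _ => ?_)
    rcases eq_or_ne i j with h | h
    · subst h
      rw [sub_self, pw_zero_base, zero_mul, norm_zero, if_pos rfl]
    · rw [if_neg h, norm_mul]
      have b1 : ‖pw (a i - a j) ((((q/2 : ℝ)) : ℂ) * z)‖ ≤ 1 := pw_norm_le_one _ _ hre1
      have b2 : ‖pw (a i) (((q:ℝ) : ℂ) - (((q/2:ℝ)) : ℂ) * z)
          - pw (a j) (((q:ℝ) : ℂ) - (((q/2:ℝ)) : ℂ) * z)‖ ≤ |a i| ^ q + |a j| ^ q := by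
        refine le_trans (norm_sub_le _ _) ?_
        rw [pw_norm_eq _ _ (by rw [hre2]; exact hq0.ne'),
          pw_norm_eq _ _ (by rw [hre2]; exact hq0.ne'), hre2]
      calc ‖pw (a i - a j) ((((q/2 : ℝ)) : ℂ) * z)‖ * ‖pw (a i) _ - pw (a j) _‖
          ≤ 1 * (|a i| ^ q + |a j| ^ q) := by
            apply mul_le_mul b1 b2 (norm_nonneg _) zero_le_one
        _ = |a i| ^ q + |a j| ^ q := one_mul _
  have hedge1 : ∀ z ∈ Complex.re ⁻¹' {1}, ‖F z‖ ≤ M1 := by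
    intro z hz
    rw [Set.mem_preimage, Set.mem_singleton_iff] at hz
    have hre1 : ((((q/2 : ℝ)) : ℂ) * z).re = q/2 := by
      simp [Complex.mul_re, Complex.ofReal_re, Complex.ofReal_im, hz]
    have hre2 : (((q:ℝ) : ℂ) - (((q/2:ℝ)) : ℂ) * z).re = q/2 := by
      simp [Complex.sub_re, Complex.mul_re, Complex.ofReal_re, Complex.ofReal_im, hz]
      ring
    have hq2ne : q/2 ≠ 0 := by positivity
    set u : Fin n → ℂ := fun i => pw (a i) (((q:ℝ) : ℂ) - (((q/2:ℝ)) : ℂ) * z) with hu_def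
    have husq : ∀ i, ‖u i‖ ^ 2 = |a i| ^ q := by
      intro i
      rw [hu_def]
      simp only
      rw [pw_norm_eq _ _ (by rw [hre2]; exact hq2ne), hre2, ← Real.rpow_natCast (|a i| ^ (q/2)) 2,
        ← Real.rpow_mul (abs_nonneg _)]
      norm_num
    have hdsq : ∀ i j, (|a i - a j| ^ (q/2)) ^ 2 = |a i - a j| ^ q := by
      intro i j
      rw [← Real.rpow_natCast (|a i - a j| ^ (q/2)) 2, ← Real.rpow_mul (abs_nonneg _)]
      norm_num
    have step1 : ‖F z‖ ≤ ∑ i, ∑ j, |a i - a j| ^ (q/2) * ‖u i - u j‖ := by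
      rw [hF_def]
      refine le_trans (norm_sum_le _ _) (Finset.sum_le_sum fun i _ => ?_)
      refine le_trans (norm_sum_le _ _) (Finset.sum_le_sum fun j _ => ?_)
      rw [norm_mul, pw_norm_eq _ _ (by rw [hre1]; exact hq2ne), hre1]
    have cs : ∑ i, ∑ j, |a i - a j| ^ (q/2) * ‖u i - u j‖
        ≤ Real.sqrt S * Real.sqrt (2 * (n:ℝ) * Sa) := by
      have hcs2 : (∑ i, ∑ j, |a i - a j| ^ (q/2) * ‖u i - u j‖) ^ 2
          ≤ (∑ i, ∑ j, (|a i - a j| ^ (q/2))^2) * (∑ i, ∑ j, ‖u i - u j‖^2) := by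
        have h := Finset.sum_mul_sq_le_sq_mul_sq (Finset.univ ×ˢ Finset.univ)
          (fun p : Fin n × Fin n => |a p.1 - a p.2| ^ (q/2)) (fun p => ‖u p.1 - u p.2‖)
        simpa only [Finset.sum_product] using h
      have hS_eq : (∑ i, ∑ j, (|a i - a j| ^ (q/2))^2) = S := by
        rw [hS_def]; exact Finset.sum_congr rfl fun i _ => Finset.sum_congr rfl fun j _ => hdsq i j
      have hu_le : (∑ i, ∑ j, ‖u i - u j‖^2) ≤ 2 * (n:ℝ) * Sa := by
        refine le_trans (complex_l2 n u) ?_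
        have : (∑ i, ‖u i‖ ^ 2) = Sa := by
          rw [hSa_def]; exact Finset.sum_congr rfl fun i _ => husq i
        rw [this]
      have hnonneg : (0:ℝ) ≤ ∑ i, ∑ j, |a i - a j| ^ (q/2) * ‖u i - u j‖ :=
        Finset.sum_nonneg fun i _ => Finset.sum_nonneg fun j _ =>
          mul_nonneg (Real.rpow_nonneg (abs_nonneg _) _) (norm_nonneg _)
      have h2 : (∑ i, ∑ j, |a i - a j| ^ (q/2) * ‖u i - u j‖) ^ 2
          ≤ S * (2 * (n:ℝ) * Sa) := by
        refine le_trans hcs2 ?_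
        rw [hS_eq]
        have hSS : (0:ℝ) ≤ S := hS_nonneg
        exact mul_le_mul_of_nonneg_left hu_le hSS
      have := Real.le_sqrt_of_sq_le h2
      rwa [Real.sqrt_mul hS_nonneg] at this
    exact le_trans step1 cs
  have hBdd : BddAbove ((norm ∘ F) '' Complex.HadamardThreeLines.verticalClosedStrip 0 1) := by
    refine ⟨∑ i, ∑ j, max 1 (|a i - a j| ^ (q/2)) * (max 1 (|a i| ^ q) + max 1 (|a j| ^ q)), ?_⟩
    rintro x ⟨z, hz, rfl⟩
    simp only [Complex.HadamardThreeLines.verticalClosedStrip, Set.mem_preimage,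
      Set.mem_Icc] at hz
    simp only [Function.comp_apply]
    rw [hF_def]
    refine le_trans (norm_sum_le _ _) (Finset.sum_le_sum fun i _ => ?_)
    refine le_trans (norm_sum_le _ _) (Finset.sum_le_sum fun j _ => ?_)
    rw [norm_mul]
    have hzre0 : (0:ℝ) ≤ z.re := hz.1
    have hzre1 : z.re ≤ 1 := hz.2
    have hre1 : ((((q/2 : ℝ)) : ℂ) * z).re = q/2 * z.re := by
      simp [Complex.mul_re, Complex.ofReal_re, Complex.ofReal_im]
    have hre2 : (((q:ℝ) : ℂ) - (((q/2:ℝ)) : ℂ) * z).re = q - q/2 * z.re := by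
      simp [Complex.sub_re, Complex.mul_re, Complex.ofReal_re, Complex.ofReal_im]
    have hb1 : ‖pw (a i - a j) ((((q/2 : ℝ)) : ℂ) * z)‖ ≤ max 1 (|a i - a j| ^ (q/2)) := by
      apply pw_norm_le_max
      · rw [hre1]; positivity
      · rw [hre1]; nlinarith
    have hA : ∀ x : ℝ, ‖pw x (((q:ℝ) : ℂ) - (((q/2:ℝ)) : ℂ) * z)‖ ≤ max 1 (|x| ^ q) := by
      intro x
      refine pw_norm_le_max x _ q ?_ ?_
      · rw [hre2]; nlinarith
      · rw [hre2]; nlinarith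
    have hb2 : ‖pw (a i) (((q:ℝ) : ℂ) - (((q/2:ℝ)) : ℂ) * z)
        - pw (a j) (((q:ℝ) : ℂ) - (((q/2:ℝ)) : ℂ) * z)‖
        ≤ max 1 (|a i| ^ q) + max 1 (|a j| ^ q) :=
      le_trans (norm_sub_le _ _) (add_le_add (hA (a i)) (hA (a j)))
    have h0le : (0:ℝ) ≤ max 1 (|a i - a j| ^ (q/2)) := le_trans zero_le_one (le_max_left _ _)
    exact mul_le_mul hb1 hb2 (norm_nonneg _) h0le
  have hmem : (θ:ℂ) ∈ Complex.HadamardThreeLines.verticalClosedStrip 0 1 := by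
    simp only [Complex.HadamardThreeLines.verticalClosedStrip, Set.mem_preimage,
      Complex.ofReal_re, Set.mem_Icc]
    exact ⟨hθ0.le, hθ1.le⟩
  have hHad := Complex.HadamardThreeLines.norm_le_interp_of_mem_verticalClosedStrip' (f := F) zero_lt_one hmem
    hdiff.diffContOnCl hBdd hedge0 hedge1
  rw [hFθ] at hHad
  rw [Complex.norm_real, Real.norm_eq_abs, abs_of_nonneg hS_nonneg, Complex.ofReal_re] at hHad
  -- final algebra
  set B : ℝ := 2 * (n:ℝ) * Sa with hB_def
  have hB_pos : 0 < B := by rw [hB_def]; positivity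
  have hM0_pos : 0 < M0 := by
    rw [hM0_def]; nlinarith
  have hM1_eq : M1 ^ θ = S ^ (θ/2) * B ^ (θ/2) := by
    rw [hM1_def, Real.sqrt_eq_rpow, Real.sqrt_eq_rpow,
      Real.mul_rpow (Real.rpow_nonneg hS_nonneg _) (Real.rpow_nonneg hB_pos.le _),
      ← Real.rpow_mul hS_nonneg, ← Real.rpow_mul hB_pos.le]
    ring_nf
  simp only [sub_zero, div_one] at hHad
  rw [hM1_eq] at hHad
  have hSsplit : S = S ^ (θ/2) * S ^ (1 - θ/2) := by
    rw [← Real.rpow_add hS_pos]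
    norm_num
  have hkey : S ^ (1 - θ/2) ≤ M0 ^ (1-θ) * B ^ (θ/2) := by
    have h1 : S ^ (1 - θ/2) * S ^ (θ/2) ≤ (M0 ^ (1-θ) * B ^ (θ/2)) * S ^ (θ/2) := by
      calc S ^ (1 - θ/2) * S ^ (θ/2) = S := by rw [mul_comm, ← hSsplit]
        _ ≤ M0 ^ (1-θ) * (S ^ (θ/2) * B ^ (θ/2)) := hHad
        _ = (M0 ^ (1-θ) * B ^ (θ/2)) * S ^ (θ/2) := by ring
    exact le_of_mul_le_mul_right h1 (Real.rpow_pos_of_pos hS_pos _)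
  have e1 : (1 - θ/2) * q = 1 := by rw [hθ_def]; field_simp; ring
  have e2 : (1-θ) * q = 2 - q := by rw [hθ_def]; field_simp; ring
  have e3 : (θ/2) * q = q - 1 := by rw [hθ_def]; field_simp
  have hfin : S ≤ M0 ^ (2-q) * B ^ (q-1) := by
    have h2 : (S ^ (1 - θ/2)) ^ q ≤ (M0 ^ (1-θ) * B ^ (θ/2)) ^ q :=
      Real.rpow_le_rpow (Real.rpow_nonneg hS_nonneg _) hkey hq0.le
    rw [← Real.rpow_mul hS_nonneg, e1, Real.rpow_one] at h2
    rw [Real.mul_rpow (Real.rpow_nonneg hM0_pos.le _) (Real.rpow_nonneg hB_pos.le _),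
      ← Real.rpow_mul hM0_pos.le, ← Real.rpow_mul hB_pos.le, e2, e3] at h2
    exact h2
  refine le_trans hfin (le_of_eq ?_)
  have hn1' : (0:ℝ) ≤ (n:ℝ) - 1 := by linarith
  have expand1 : M0 ^ (2-q) = 2^(2-q) * (((n:ℝ)-1)^(2-q) * Sa^(2-q)) := by
    rw [hM0_def, show (2:ℝ)*((n:ℝ)-1)*Sa = 2*(((n:ℝ)-1)*Sa) from by ring,
      Real.mul_rpow (by norm_num) (mul_nonneg hn1' hSa_pos.le),
      Real.mul_rpow hn1' hSa_pos.le]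
  have expand2 : B ^ (q-1) = 2^(q-1) * ((n:ℝ)^(q-1) * Sa^(q-1)) := by
    rw [hB_def, show (2:ℝ)*(n:ℝ)*Sa = 2*((n:ℝ)*Sa) from by ring,
      Real.mul_rpow (by norm_num) (mul_nonneg hnR.le hSa_pos.le),
      Real.mul_rpow hnR.le hSa_pos.le]
  have h2pow : (2:ℝ) ^ (2-q) * 2 ^ (q-1) = 2 := by
    rw [← Real.rpow_add (by norm_num : (0:ℝ) < 2)]
    norm_num
  have hSapow : Sa ^ (2-q) * Sa ^ (q-1) = Sa := by
    rw [← Real.rpow_add hSa_pos]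
    norm_num
  rw [expand1, expand2]
  calc (2:ℝ) ^ (2-q) * (((n:ℝ)-1) ^ (2-q) * Sa ^ (2-q))
        * ((2:ℝ) ^ (q-1) * ((n:ℝ) ^ (q-1) * Sa ^ (q-1)))
      = ((2:ℝ) ^ (2-q) * 2 ^ (q-1)) * (((n:ℝ)-1) ^ (2-q) * (n:ℝ) ^ (q-1)
        * (Sa ^ (2-q) * Sa ^ (q-1))) := by ring
    _ = 2 * ((n:ℝ)-1) ^ (2-q) * (n:ℝ) ^ (q-1) * Sa := by rw [h2pow, hSapow]; ring
-- main theorem part (appended to final.lean for testing)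

lemma count_offdiag (n : ℕ) :
    ∑ _i : Fin n, ∑ j : Fin n, (if _i = j then (0:ℝ) else 1) = (n:ℝ) * ((n:ℝ) - 1) := by
  have step : ∀ i : Fin n, ∑ j : Fin n, (if i = j then (0:ℝ) else 1) = (n:ℝ) - 1 := by
    intro i
    have : ∀ j : Fin n, (if i = j then (0:ℝ) else 1) = 1 - (if i = j then (1:ℝ) else 0) := by
      intro j; split_ifs <;> ring
    simp_rw [this, Finset.sum_sub_distrib, Finset.sum_ite_eq, Finset.mem_univ, if_true,
      Finset.sum_const, Finset.card_univ, Fintype.card_fin, nsmul_eq_mul, mul_one]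
  simp_rw [step, Finset.sum_const, Finset.card_univ, Fintype.card_fin, nsmul_eq_mul]


/-- Packing bound in `ℓ^q` for `1 < q < 2`: if `v₁,…,vₙ` lie in the closed ball of
radius `R < 2^{-1/q}` and are pairwise `1`-separated, then
`n ≤ ⌊1/(1 - (2R^q)^{1/(q-1)})⌋`. -/
theorem stmt_8 (q R : ℝ) (hq1 : 1 < q) (hq2 : q < 2) (hR0 : 0 < R)
    (hR : R < 2 ^ (-1 / q)) (n : ℕ)
    (v : Fin n → lp (fun _ : ℕ => ℝ) (ENNReal.ofReal q))
    (hball : ∀ i, ‖v i‖ ≤ R)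
    (hsep : ∀ i j, i ≠ j → 1 ≤ ‖v i - v j‖) :
    n ≤ ⌊1 / (1 - (2 * R ^ q) ^ (1 / (q - 1)))⌋₊ := by
  have hq0 : (0:ℝ) < q := by linarith
  set t : ℝ := (2 * R ^ q) ^ (1 / (q - 1)) with ht_def
  -- basic facts about t
  have hRq_pos : 0 < R ^ q := Real.rpow_pos_of_pos hR0 q
  have hRq : R ^ q < 1/2 := by
    have h1 : R ^ q < (2 ^ (-1/q) : ℝ) ^ q := Real.rpow_lt_rpow hR0.le hR hq0
    have h2 : ((2:ℝ) ^ (-1/q)) ^ q = 2 ^ ((-1/q) * q) := by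
      rw [← Real.rpow_mul (by norm_num : (0:ℝ) ≤ 2)]
    have h3 : (-1/q) * q = -1 := by field_simp
    rw [h2, h3] at h1
    rw [Real.rpow_neg_one] at h1
    linarith [h1]
  have h2Rq_pos : 0 < 2 * R ^ q := by linarith
  have h2Rq : 2 * R ^ q < 1 := by linarith
  have hexp_pos : 0 < 1 / (q - 1) := by
    apply div_pos one_pos; linarith
  have ht_pos : 0 < t := Real.rpow_pos_of_pos h2Rq_pos _
  have ht_lt : t < 1 := Real.rpow_lt_one h2Rq_pos.le h2Rq hexp_pos
  have h1t : 0 < 1 - t := by linarith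
  -- reduce to n*(1-t) ≤ 1
  suffices hsuff : (n:ℝ) * (1 - t) ≤ 1 by
    apply Nat.le_floor
    rw [le_div_iff₀ h1t]
    exact hsuff
  rcases Nat.eq_zero_or_pos n with hn0 | hn_pos
  · subst hn0
    norm_num
  rcases Nat.lt_or_ge n 2 with hn1 | hn2
  · have : n = 1 := by omega
    subst this
    rw [Nat.cast_one, one_mul]
    linarith
  -- main case n ≥ 2
  have hnR : (0:ℝ) < n := by positivity
  have hn1R : (0:ℝ) < (n:ℝ) - 1 := by
    have : (2:ℝ) ≤ (n:ℝ) := by exact_mod_cast hn2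
    linarith
  have hptoReal : (ENNReal.ofReal q).toReal = q := ENNReal.toReal_ofReal hq0.le
  have hp0 : 0 < (ENNReal.ofReal q).toReal := by rw [hptoReal]; exact hq0
  -- Summing the scalar inequality over coordinates
  set T : ℝ := 2 * ((n:ℝ) - 1) ^ (2 - q) * (n:ℝ) ^ (q - 1) with hT_def
  have hsum_d : ∀ i j : Fin n, HasSum (fun k : ℕ => |v i k - v j k| ^ q) (‖v i - v j‖ ^ q) := by
    intro i j
    have h := lp.hasSum_norm hp0 (v i - v j)
    rw [hptoReal] at h
    have he : (fun k : ℕ => ‖(v i - v j) k‖ ^ q) = fun k : ℕ => |v i k - v j k| ^ q := by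
      funext k
      rw [lp.coeFn_sub]
      simp [Real.norm_eq_abs]
    rwa [he] at h
  have hsum_a : ∀ i : Fin n, HasSum (fun k : ℕ => |v i k| ^ q) (‖v i‖ ^ q) := by
    intro i
    have h := lp.hasSum_norm hp0 (v i)
    rw [hptoReal] at h
    have he : (fun k : ℕ => ‖(v i) k‖ ^ q) = fun k : ℕ => |v i k| ^ q := by
      funext k
      simp [Real.norm_eq_abs]
    rwa [he] at h
  have hLHS : HasSum (fun k : ℕ => ∑ i, ∑ j, |v i k - v j k| ^ q)
      (∑ i, ∑ j, ‖v i - v j‖ ^ q) := by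
    apply hasSum_sum
    intro i _
    apply hasSum_sum
    intro j _
    exact hsum_d i j
  have hRHS : HasSum (fun k : ℕ => T * ∑ i, |v i k| ^ q) (T * ∑ i, ‖v i‖ ^ q) := by
    apply HasSum.mul_left
    apply hasSum_sum
    intro i _
    exact hsum_a i
  have main : ∑ i, ∑ j, ‖v i - v j‖ ^ q ≤ T * ∑ i, ‖v i‖ ^ q := by
    refine hasSum_le (fun k => ?_) hLHS hRHS
    rw [hT_def]
    have := key_scalar hq1 hq2 n (fun i => v i k)
    rw [mul_assoc, mul_assoc] at this ⊢
    exact this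
  have lower : (n:ℝ) * ((n:ℝ) - 1) ≤ ∑ i, ∑ j, ‖v i - v j‖ ^ q := by
    rw [← count_offdiag n]
    refine Finset.sum_le_sum fun i _ => Finset.sum_le_sum fun j _ => ?_
    rcases eq_or_ne i j with h | h
    · rw [if_pos h]
      exact Real.rpow_nonneg (lp.norm_nonneg' _) _
    · rw [if_neg h]
      calc (1:ℝ) = 1 ^ q := (Real.one_rpow q).symm
        _ ≤ ‖v i - v j‖ ^ q := Real.rpow_le_rpow zero_le_one (hsep i j h) hq0.le
  have upper : ∑ i, ‖v i‖ ^ q ≤ (n:ℝ) * R ^ q := by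
    calc ∑ i, ‖v i‖ ^ q ≤ ∑ _i : Fin n, R ^ q := by
          refine Finset.sum_le_sum fun i _ => ?_
          exact Real.rpow_le_rpow (lp.norm_nonneg' _) (hball i) hq0.le
      _ = (n:ℝ) * R ^ q := by
          rw [Finset.sum_const, Finset.card_univ, Fintype.card_fin, nsmul_eq_mul]
  have hT_pos : 0 < T := by
    rw [hT_def]
    have := Real.rpow_pos_of_pos hn1R (2-q)
    have := Real.rpow_pos_of_pos hnR (q-1)
    positivity
  have chain : (n:ℝ) * ((n:ℝ) - 1) ≤ T * ((n:ℝ) * R ^ q) :=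
    le_trans lower (le_trans main (by nlinarith [hT_pos]))
  -- derive ((n-1)/n)^(q-1) ≤ 2 R^q
  have hstep1 : ((n:ℝ) - 1) ≤ 2 * ((n:ℝ)-1)^(2-q) * (n:ℝ)^(q-1) * R ^ q := by
    rw [hT_def] at chain
    have h := (mul_le_mul_iff_right₀ hnR).mp (by linarith [chain] :
      (n:ℝ) * (((n:ℝ)-1)) ≤ (n:ℝ) * (2 * ((n:ℝ)-1)^(2-q) * (n:ℝ)^(q-1) * R ^ q))
    exact h
  have hsplit : ((n:ℝ) - 1) = ((n:ℝ)-1)^(q-1) * ((n:ℝ)-1)^(2-q) := by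
    rw [← Real.rpow_add hn1R]
    norm_num
  have hstep2 : ((n:ℝ)-1)^(q-1) ≤ 2 * (n:ℝ)^(q-1) * R ^ q := by
    have hpos : 0 < ((n:ℝ)-1)^(2-q) := Real.rpow_pos_of_pos hn1R _
    have h : ((n:ℝ)-1)^(q-1) * ((n:ℝ)-1)^(2-q)
        ≤ (2 * (n:ℝ)^(q-1) * R ^ q) * ((n:ℝ)-1)^(2-q) := by
      calc ((n:ℝ)-1)^(q-1) * ((n:ℝ)-1)^(2-q) = (n:ℝ) - 1 := hsplit.symm
        _ ≤ 2 * ((n:ℝ)-1)^(2-q) * (n:ℝ)^(q-1) * R ^ q := hstep1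
        _ = (2 * (n:ℝ)^(q-1) * R ^ q) * ((n:ℝ)-1)^(2-q) := by ring
    exact le_of_mul_le_mul_right h hpos
  have hstep3 : (((n:ℝ)-1)/(n:ℝ))^(q-1) ≤ 2 * R ^ q := by
    rw [Real.div_rpow hn1R.le hnR.le]
    rw [div_le_iff₀ (Real.rpow_pos_of_pos hnR _)]
    calc ((n:ℝ)-1)^(q-1) ≤ 2 * (n:ℝ)^(q-1) * R ^ q := hstep2
      _ = 2 * R ^ q * (n:ℝ)^(q-1) := by ring
  -- raise to power 1/(q-1)
  have hstep4 : ((n:ℝ)-1)/(n:ℝ) ≤ t := by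
    have h := Real.rpow_le_rpow (Real.rpow_nonneg (by positivity) _) hstep3 hexp_pos.le
    rw [← Real.rpow_mul (by positivity : (0:ℝ) ≤ ((n:ℝ)-1)/(n:ℝ))] at h
    have he : (q-1) * (1/(q-1)) = 1 := by
      rw [mul_one_div, div_self (by linarith : q - (1:ℝ) ≠ 0)]
    rw [he, Real.rpow_one] at h
    rw [ht_def]
    exact h
  -- conclude
  have : 1 - t ≤ 1/(n:ℝ) := by
    have : 1 - 1/(n:ℝ) = ((n:ℝ)-1)/(n:ℝ) := by field_simp
    linarith [hstep4, this]
  calc (n:ℝ) * (1 - t) ≤ (n:ℝ) * (1/(n:ℝ)) := by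
        apply mul_le_mul_of_nonneg_left this hnR.le
    _ = 1 := by field_simp
end

section
/- Let B be an infinite-dimensional Banach space. Assume (Dvoretzky) that for every ε > 0 and every n there exist x_1,...,x_n ∈ B with (1-ε)(∑α_i²)^{1/2} ≤ ‖∑α_i x_i‖ ≤ (1+ε)(∑α_i²)^{1/2} for all real α. Then for every R > 1/√2 and every n, there exist n points in the closed ball of radius R of B with pairwise distances ≥ 1; hence R_c(B) ≤ 1/√2. -/
/-- The critical packing radius of a normed space `B`. -/
noncomputable def Rc (B : Type*) [NormedAddCommGroup B] : ℝ :=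
  sInf {R : ℝ | ∀ n : ℕ, ∃ v : Fin n → B,
    (∀ i, ‖v i‖ ≤ R) ∧ ∀ i j, i ≠ j → 1 ≤ ‖v i - v j‖}

/-- Assuming Dvoretzky's theorem for the infinite-dimensional Banach space `B`, for
every `R > 1/√2` and every `n` there are `n` points of the closed ball of radius `R`
with pairwise distances `≥ 1`; hence `R_c(B) ≤ 1/√2`. -/
theorem stmt_16 (B : Type*) [NormedAddCommGroup B] [NormedSpace ℝ B] [CompleteSpace B]
    (hB : ¬ FiniteDimensional ℝ B)
    (hDv : ∀ ε : ℝ, 0 < ε → ∀ n : ℕ, ∃ x : Fin n → B, ∀ α : Fin n → ℝ,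
      (1 - ε) * Real.sqrt (∑ i, α i ^ 2) ≤ ‖∑ i, α i • x i‖ ∧
      ‖∑ i, α i • x i‖ ≤ (1 + ε) * Real.sqrt (∑ i, α i ^ 2)) :
    (∀ R : ℝ, 1 / Real.sqrt 2 < R → ∀ n : ℕ, ∃ w : Fin n → B,
      (∀ i, ‖w i‖ ≤ R) ∧ ∀ i j, i ≠ j → 1 ≤ ‖w i - w j‖) ∧
    Rc B ≤ 1 / Real.sqrt 2 := by
  have h2 : (0:ℝ) < Real.sqrt 2 := Real.sqrt_pos.mpr (by norm_num)
  have part1 : ∀ R : ℝ, 1 / Real.sqrt 2 < R → ∀ n : ℕ, ∃ w : Fin n → B,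
      (∀ i, ‖w i‖ ≤ R) ∧ ∀ i j, i ≠ j → 1 ≤ ‖w i - w j‖ := by
    intro R hR n
    have hc : 1 < Real.sqrt 2 * R := by
      rw [div_lt_iff₀ h2] at hR; linarith [mul_comm R (Real.sqrt 2)]
    set c := Real.sqrt 2 * R with hcdef
    set ε := (c - 1) / (c + 1) with hεdef
    have hcp : (0:ℝ) < c + 1 := by linarith
    have hε : 0 < ε := div_pos (by linarith) hcp
    have hε1 : ε < 1 := by rw [div_lt_one hcp]; linarith
    have hkey : 1 + ε = c * (1 - ε) := by rw [hεdef, one_add_div hcp.ne', one_sub_div hcp.ne', mul_div_assoc', div_eq_div_iff hcp.ne' hcp.ne']; ring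
    obtain ⟨x, hx⟩ := hDv ε hε n
    have hden : (0:ℝ) < Real.sqrt 2 * (1 - ε) := mul_pos h2 (by linarith)
    refine ⟨fun i => (Real.sqrt 2 * (1 - ε))⁻¹ • x i, ?_, ?_⟩
    · intro i
      set α : Fin n → ℝ := fun k => if k = i then 1 else 0 with hα
      have hs : ∑ k, α k • x k = x i := by simp [hα, ite_smul]
      have hsum : ∑ k, α k ^ 2 = 1 := by simp [hα, apply_ite (· ^ 2)]
      have hb := (hx α).2
      rw [hs, hsum, Real.sqrt_one, mul_one] at hb
      have h1 : ‖(Real.sqrt 2 * (1 - ε))⁻¹ • x i‖ ≤ (Real.sqrt 2 * (1 - ε))⁻¹ * (1 + ε) := by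
        rw [norm_smul, Real.norm_eq_abs, abs_of_pos (inv_pos.mpr hden)]
        exact mul_le_mul_of_nonneg_left hb (le_of_lt (inv_pos.mpr hden))
      refine h1.trans (le_of_eq ?_)
      rw [hkey, hcdef]
      field_simp [(sub_pos.mpr hε1).ne', h2.ne']
    · intro i j hij
      set α : Fin n → ℝ := fun k => (if k = i then 1 else 0) - (if k = j then 1 else 0) with hα
      have hs : ∑ k, α k • x k = x i - x j := by
        simp [hα, sub_smul, ite_smul, Finset.sum_sub_distrib]
      have hsum : ∑ k, α k ^ 2 = 2 := by
        have he : ∀ k, α k ^ 2 = (if k = i then 1 else 0) + (if k = j then 1 else 0) := by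
          intro k
          rcases eq_or_ne k i with rfl | hki
          · rcases eq_or_ne k j with rfl | hkj
            · exact absurd rfl hij
            · simp [hα, hkj]
          · rcases eq_or_ne k j with rfl | hkj
            · simp [hα, hki]
            · simp [hα, hki, hkj]
        rw [Finset.sum_congr rfl fun k _ => he k, Finset.sum_add_distrib]
        simp
        norm_num
      have hb := (hx α).1
      rw [hs, hsum] at hb
      have hnorm : ‖(Real.sqrt 2 * (1 - ε))⁻¹ • x i - (Real.sqrt 2 * (1 - ε))⁻¹ • x j‖
          = (Real.sqrt 2 * (1 - ε))⁻¹ * ‖x i - x j‖ := by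
        rw [← smul_sub, norm_smul, Real.norm_eq_abs, abs_of_pos (inv_pos.mpr hden)]
      rw [hnorm, inv_mul_eq_div, le_div_iff₀ hden, one_mul]
      linarith [hb, mul_comm (1 - ε) (Real.sqrt 2)]
  refine ⟨part1, ?_⟩
  have hbdd : BddBelow {R : ℝ | ∀ n : ℕ, ∃ v : Fin n → B,
      (∀ i, ‖v i‖ ≤ R) ∧ ∀ i j, i ≠ j → 1 ≤ ‖v i - v j‖} := by
    refine ⟨0, fun R hR => ?_⟩
    obtain ⟨v, hv, -⟩ := hR 1
    exact le_trans (norm_nonneg (v 0)) (hv 0)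
  have : ∀ δ : ℝ, 0 < δ → Rc B ≤ 1 / Real.sqrt 2 + δ := by
    intro δ hδ
    exact csInf_le hbdd (part1 (1 / Real.sqrt 2 + δ) (by linarith))
  exact le_of_forall_pos_le_add this
end
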